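/- arXiv:2303.05348 — 6 statements merged into one kernel-verified Lean document; each statement's English description precedes it below -/
import Mathlib

section
/- Let N ≥ 1 be an integer and β > 0. There is a constant c (depending only on N, β) such that for all a, b ∈ ℝ^N and r, s > 0, ∫_{ℝ^N} (rs)^β / ((r^{N+β} + |x−a|^{N+β})(s^{N+β} + |x−b|^{N+β})) dx ≤ c · (r+s)^β / ((r+s)^{N+β} + |a−b|^{N+β}). -/
open MeasureTheory Set Module Real

section Aux

variable {N : ℕ} {β : ℝ}

/-- The standard kernel. -/
noncomputable def Kker (N : ℕ) (β : ℝ) (r : ℝ) (x : EuclideanSpace ℝ (Fin N)) : ℝ :=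
  r ^ β / (r ^ ((N : ℝ) + β) + ‖x‖ ^ ((N : ℝ) + β))

lemma Kker_nonneg (r : ℝ) (hr : 0 ≤ r) (x : EuclideanSpace ℝ (Fin N)) :
    0 ≤ Kker N β r x := by
  unfold Kker
  have h1 : (0:ℝ) ≤ r ^ β := Real.rpow_nonneg hr _
  have h2 : (0:ℝ) ≤ r ^ ((N:ℝ)+β) := Real.rpow_nonneg hr _
  have h3 : (0:ℝ) ≤ ‖x‖ ^ ((N:ℝ)+β) := Real.rpow_nonneg (norm_nonneg _) _
  positivity

lemma gker_integrable (hN : 1 ≤ N) (hβ : 0 < β) :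
    Integrable (fun x : EuclideanSpace ℝ (Fin N) => (1 + ‖x‖ ^ ((N:ℝ)+β))⁻¹) := by
  set p : ℝ := (N:ℝ) + β with hp'
  have hp : 0 < p := by positivity
  have hfr : (finrank ℝ (EuclideanSpace ℝ (Fin N)) : ℝ) < p := by
    simp [hp', finrank_euclideanSpace, hβ]
  refine ((integrable_one_add_norm hfr).const_mul ((2:ℝ) ^ p)).mono' ?_ ?_
  · apply Measurable.aestronglyMeasurable
    fun_prop
  · filter_upwards with x
    have ht : (0:ℝ) ≤ ‖x‖ := norm_nonneg _
    have h1 : (0:ℝ) < 1 + ‖x‖ ^ p := by positivity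
    have h2 : (0:ℝ) < (1 + ‖x‖) ^ p := Real.rpow_pos_of_pos (by linarith) _
    rw [Real.norm_of_nonneg (by positivity)]
    have hbound : (1 + ‖x‖) ^ p ≤ 2 ^ p * (1 + ‖x‖ ^ p) := by
      have hmax : 1 + ‖x‖ ≤ 2 * max 1 ‖x‖ := by
        rcases le_total 1 ‖x‖ with h | h
        · rw [max_eq_right h]; linarith
        · rw [max_eq_left h]; linarith
      calc (1 + ‖x‖) ^ p ≤ (2 * max 1 ‖x‖) ^ p :=
            Real.rpow_le_rpow (by linarith) hmax hp.le
        _ = 2 ^ p * (max 1 ‖x‖) ^ p := Real.mul_rpow (by norm_num) (by positivity)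
        _ ≤ 2 ^ p * (1 + ‖x‖ ^ p) := by
            apply mul_le_mul_of_nonneg_left _ (by positivity)
            rcases le_total 1 ‖x‖ with h | h
            · rw [max_eq_right h]
              have : (0:ℝ) ≤ ‖x‖ ^ p := by positivity
              linarith
            · rw [max_eq_left h, Real.one_rpow]
              have : (0:ℝ) ≤ ‖x‖ ^ p := by positivity
              linarith
    have h2p : (0:ℝ) < (2:ℝ) ^ p := Real.rpow_pos_of_pos two_pos _
    rw [Real.rpow_neg (by linarith : (0:ℝ) ≤ 1 + ‖x‖), ← one_div, ← div_eq_mul_inv,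
      div_le_div_iff₀ h1 h2, one_mul]
    exact hbound

lemma Kker_eq_scale (hβ : 0 < β) {r : ℝ} (hr : 0 < r) (x : EuclideanSpace ℝ (Fin N)) :
    Kker N β r x = r ^ (-(N:ℝ)) * (1 + ‖r⁻¹ • x‖ ^ ((N:ℝ)+β))⁻¹ := by
  set p : ℝ := (N:ℝ) + β with hp'
  have hA : (0:ℝ) < r ^ p := Real.rpow_pos_of_pos hr _
  have ht : (0:ℝ) ≤ ‖x‖ ^ p := Real.rpow_nonneg (norm_nonneg _) _
  have hnorm : ‖r⁻¹ • x‖ = r⁻¹ * ‖x‖ := by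
    rw [norm_smul, Real.norm_of_nonneg (by positivity)]
  rw [hnorm, Real.mul_rpow (by positivity) (norm_nonneg _), Real.inv_rpow hr.le]
  have h : 1 + (r ^ p)⁻¹ * ‖x‖ ^ p = (r ^ p + ‖x‖ ^ p) / r ^ p := by
    field_simp
  rw [h, inv_div, ← mul_div_assoc]
  have e1 : r ^ (-(N:ℝ)) * r ^ p = r ^ β := by
    rw [← Real.rpow_add hr, hp']; ring_nf
  rw [e1]
  rfl

lemma Kker_integrable (hN : 1 ≤ N) (hβ : 0 < β) {r : ℝ} (hr : 0 < r) :
    Integrable (Kker N β r) := by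
  have h1 := (gker_integrable hN hβ).comp_smul (R := r⁻¹) (inv_ne_zero hr.ne')
  exact ((h1.const_mul (r ^ (-(N:ℝ)))).congr
    (Filter.Eventually.of_forall fun x => (Kker_eq_scale hβ hr x).symm))

lemma Kker_integral (hN : 1 ≤ N) (hβ : 0 < β) {r : ℝ} (hr : 0 < r) :
    ∫ x, Kker N β r x =
      ∫ x : EuclideanSpace ℝ (Fin N), (1 + ‖x‖ ^ ((N:ℝ)+β))⁻¹ := by
  simp only [Kker_eq_scale hβ hr]
  rw [integral_const_mul,
    Measure.integral_comp_inv_smul_of_nonneg volume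
      (fun x : EuclideanSpace ℝ (Fin N) => (1 + ‖x‖ ^ ((N:ℝ)+β))⁻¹) hr.le,
    finrank_euclideanSpace, Fintype.card_fin, smul_eq_mul, ← mul_assoc,
    ← Real.rpow_natCast r N, ← Real.rpow_add hr]
  norm_num

lemma Kker_min_le (hβ : 0 < β) (a b : EuclideanSpace ℝ (Fin N)) {r s : ℝ}
    (hr : 0 < r) (hs : 0 < s) (x : EuclideanSpace ℝ (Fin N)) :
    min (Kker N β r (x - a)) (Kker N β s (x - b)) ≤
      2 ^ ((N:ℝ) + β + 1) *
        ((r + s) ^ β / ((r + s) ^ ((N:ℝ)+β) + ‖a - b‖ ^ ((N:ℝ)+β))) := by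
  set p : ℝ := (N:ℝ) + β with hp'
  have hp : 0 < p := by positivity
  set D : ℝ := r + s with hD'
  set d : ℝ := ‖a - b‖ with hd'
  have hD : 0 < D := by positivity
  have hd : 0 ≤ d := norm_nonneg _
  have hmaxpos : 0 < max D d := lt_of_lt_of_le hD (le_max_left _ _)
  have hmaxp : 0 < (max D d) ^ p := Real.rpow_pos_of_pos hmaxpos _
  have hDp : 0 < D ^ p := Real.rpow_pos_of_pos hD _
  have hdp : 0 ≤ d ^ p := Real.rpow_nonneg hd _
  have hDβ : 0 < D ^ β := Real.rpow_pos_of_pos hD _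
  have hdenpos : 0 < D ^ p + d ^ p := by linarith
  have h2p : (0:ℝ) < 2 ^ p := Real.rpow_pos_of_pos two_pos _
  -- reduce to bound with max
  suffices hmain : min (Kker N β r (x - a)) (Kker N β s (x - b)) ≤
      2 ^ p * (D ^ β / (max D d) ^ p) by
    refine hmain.trans ?_
    have hden : D ^ p + d ^ p ≤ 2 * (max D d) ^ p := by
      have h1 : D ^ p ≤ (max D d) ^ p :=
        Real.rpow_le_rpow hD.le (le_max_left _ _) hp.le
      have h2 : d ^ p ≤ (max D d) ^ p :=
        Real.rpow_le_rpow hd (le_max_right _ _) hp.le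
      linarith
    have key2 : D ^ β / (max D d) ^ p ≤ 2 * (D ^ β / (D ^ p + d ^ p)) := by
      rw [← mul_div_assoc, div_le_div_iff₀ hmaxp hdenpos]
      nlinarith
    calc 2 ^ p * (D ^ β / (max D d) ^ p)
        ≤ 2 ^ p * (2 * (D ^ β / (D ^ p + d ^ p))) :=
          mul_le_mul_of_nonneg_left key2 h2p.le
      _ = 2 ^ (p + 1) * (D ^ β / (D ^ p + d ^ p)) := by
          rw [Real.rpow_add_one two_ne_zero p]; ring
  -- two pointwise bounds
  have hbound1 : ∀ t : ℝ, 0 < t → D ≤ 2 * t → ∀ y : EuclideanSpace ℝ (Fin N),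
      Kker N β t y ≤ 2 ^ p * (D ^ β / D ^ p) := by
    intro t ht hDt y
    have h1 : Kker N β t y ≤ t ^ β / t ^ p := by
      unfold Kker
      exact div_le_div₀ (Real.rpow_nonneg ht.le _) le_rfl (Real.rpow_pos_of_pos ht _)
        (le_add_of_nonneg_right (Real.rpow_nonneg (norm_nonneg _) _))
    have h2 : t ^ β / t ^ p = t ^ (-(N:ℝ)) := by
      rw [← Real.rpow_sub ht]
      norm_num [hp']
    have h3 : t ^ (-(N:ℝ)) ≤ (D / 2) ^ (-(N:ℝ)) :=
      Real.rpow_le_rpow_of_nonpos (by linarith) (by linarith)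
        (by simp [Nat.cast_nonneg])
    have h4 : (D / 2) ^ (-(N:ℝ)) = D ^ (-(N:ℝ)) * 2 ^ ((N:ℝ)) := by
      rw [Real.div_rpow hD.le (by norm_num), Real.rpow_neg (by norm_num : (0:ℝ) ≤ 2),
        div_inv_eq_mul]
    have h5 : D ^ (-(N:ℝ)) = D ^ β / D ^ p := by
      rw [← Real.rpow_sub hD]; norm_num [hp']
    have h6 : (2:ℝ) ^ ((N:ℝ)) ≤ 2 ^ p :=
      Real.rpow_le_rpow_of_exponent_le one_le_two (by simp [hp']; linarith)
    calc Kker N β t y ≤ t ^ (-(N:ℝ)) := h2 ▸ h1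
      _ ≤ (D / 2) ^ (-(N:ℝ)) := h3
      _ = D ^ β / D ^ p * 2 ^ ((N:ℝ)) := by rw [h4, h5]
      _ ≤ D ^ β / D ^ p * 2 ^ p := by
          apply mul_le_mul_of_nonneg_left h6 (by positivity)
      _ = 2 ^ p * (D ^ β / D ^ p) := mul_comm _ _
  rcases le_total d D with hcase | hcase
  · -- d ≤ D
    rw [max_eq_left hcase]
    rcases le_total r s with hrs | hrs
    · exact le_trans (min_le_right _ _) (hbound1 s hs (by linarith) (x - b))
    · exact le_trans (min_le_left _ _) (hbound1 r hr (by linarith) (x - a))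
  · -- D ≤ d
    rw [max_eq_right hcase]
    have hd2 : 0 < d := lt_of_lt_of_le hD hcase
    have hbound2 : ∀ (t : ℝ) (y : EuclideanSpace ℝ (Fin N)), 0 < t → t ≤ D →
        d / 2 ≤ ‖y‖ → Kker N β t y ≤ 2 ^ p * (D ^ β / d ^ p) := by
      intro t y ht htD hy
      have hyp : (d / 2) ^ p ≤ t ^ p + ‖y‖ ^ p := by
        have := Real.rpow_le_rpow (by positivity) hy hp.le
        have ht' : (0:ℝ) ≤ t ^ p := Real.rpow_nonneg ht.le _
        linarith
      have hhalf : (d / 2) ^ p = d ^ p / 2 ^ p :=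
        Real.div_rpow hd (by norm_num : (0:ℝ) ≤ 2) p
      have h1 : Kker N β t y ≤ D ^ β / (d ^ p / 2 ^ p) := by
        unfold Kker
        apply div_le_div₀ (Real.rpow_nonneg hD.le _)
          (Real.rpow_le_rpow ht.le htD hβ.le) (by positivity)
          (hhalf ▸ hyp)
      refine h1.trans_eq ?_
      rw [div_div_eq_mul_div, mul_comm (D ^ β), mul_div_assoc]
    have htri : d ≤ ‖x - a‖ + ‖x - b‖ := by
      have : a - b = (x - b) - (x - a) := by abel
      calc d = ‖(x - b) - (x - a)‖ := by rw [hd', this]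
        _ ≤ ‖x - b‖ + ‖x - a‖ := norm_sub_le _ _
        _ = ‖x - a‖ + ‖x - b‖ := add_comm _ _
    rcases le_or_gt (d / 2) ‖x - a‖ with hxa | hxa
    · exact le_trans (min_le_left _ _) (hbound2 r (x - a) hr (by linarith) hxa)
    · have hxb : d / 2 ≤ ‖x - b‖ := by linarith
      exact le_trans (min_le_right _ _) (hbound2 s (x - b) hs (by linarith) hxb)

end Aux

/-- Convolution-type kernel estimate: for `N ≥ 1`, `β > 0`, there is `c` such that
for all `a, b ∈ ℝ^N`, `r, s > 0`,
`∫ (rs)^β / ((r^{N+β}+|x-a|^{N+β})(s^{N+β}+|x-b|^{N+β})) dx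
  ≤ c (r+s)^β / ((r+s)^{N+β} + |a-b|^{N+β})`. -/
theorem stmt_4 (N : ℕ) (hN : 1 ≤ N) (β : ℝ) (hβ : 0 < β) :
    ∃ c : ℝ, 0 < c ∧ ∀ (a b : EuclideanSpace ℝ (Fin N)) (r s : ℝ), 0 < r → 0 < s →
      (∫ x : EuclideanSpace ℝ (Fin N),
          (r * s) ^ β /
            ((r ^ ((N : ℝ) + β) + ‖x - a‖ ^ ((N : ℝ) + β)) *
              (s ^ ((N : ℝ) + β) + ‖x - b‖ ^ ((N : ℝ) + β))))
        ≤ c * (r + s) ^ β / ((r + s) ^ ((N : ℝ) + β) + ‖a - b‖ ^ ((N : ℝ) + β)) := by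
  set p : ℝ := (N : ℝ) + β with hp'
  set I : ℝ := ∫ x : EuclideanSpace ℝ (Fin N), (1 + ‖x‖ ^ p)⁻¹ with hI'
  have hI0 : 0 ≤ I := by
    rw [hI']
    refine integral_nonneg fun x => ?_
    have : (0:ℝ) ≤ ‖x‖ ^ p := Real.rpow_nonneg (norm_nonneg _) _
    positivity
  have h2p1 : (0:ℝ) < 2 ^ (p + 1) := Real.rpow_pos_of_pos two_pos _
  refine ⟨2 ^ (p + 1) * (2 * I + 1), by nlinarith, ?_⟩
  intro a b r s hr hs
  have hD : 0 < r + s := by linarith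
  have hDp : 0 < (r + s) ^ p := Real.rpow_pos_of_pos hD _
  have hdp : (0:ℝ) ≤ ‖a - b‖ ^ p := Real.rpow_nonneg (norm_nonneg _) _
  have hden : 0 < (r + s) ^ p + ‖a - b‖ ^ p := by linarith
  have hfrac : (0:ℝ) ≤ (r + s) ^ β / ((r + s) ^ p + ‖a - b‖ ^ p) :=
    div_nonneg (Real.rpow_nonneg hD.le _) hden.le
  set M : ℝ := 2 ^ (p + 1) * ((r + s) ^ β / ((r + s) ^ p + ‖a - b‖ ^ p)) with hM'
  have hM0 : 0 ≤ M := mul_nonneg h2p1.le hfrac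
  have hint_a : Integrable fun x : EuclideanSpace ℝ (Fin N) => Kker N β r (x - a) :=
    (Kker_integrable hN hβ hr).comp_sub_right a
  have hint_b : Integrable fun x : EuclideanSpace ℝ (Fin N) => Kker N β s (x - b) :=
    (Kker_integrable hN hβ hs).comp_sub_right b
  have hfx : (fun x : EuclideanSpace ℝ (Fin N) =>
      (r * s) ^ β / ((r ^ p + ‖x - a‖ ^ p) * (s ^ p + ‖x - b‖ ^ p)))
      = fun x => Kker N β r (x - a) * Kker N β s (x - b) := by
    funext x
    unfold Kker
    rw [Real.mul_rpow hr.le hs.le, div_mul_div_comm]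
  rw [hfx]
  calc (∫ x : EuclideanSpace ℝ (Fin N), Kker N β r (x - a) * Kker N β s (x - b))
      ≤ ∫ x : EuclideanSpace ℝ (Fin N),
          M * (Kker N β r (x - a) + Kker N β s (x - b)) := by
        refine integral_mono_of_nonneg ?_ ((hint_a.add hint_b).const_mul M) ?_
        · filter_upwards with x
          exact mul_nonneg (Kker_nonneg r hr.le _) (Kker_nonneg s hs.le _)
        · filter_upwards with x
          have hu : 0 ≤ Kker N β r (x - a) := Kker_nonneg r hr.le _
          have hv : 0 ≤ Kker N β s (x - b) := Kker_nonneg s hs.le _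
          have hmin := Kker_min_le hβ a b hr hs x
          have step1 : Kker N β r (x - a) * Kker N β s (x - b) ≤
              min (Kker N β r (x - a)) (Kker N β s (x - b)) *
                (Kker N β r (x - a) + Kker N β s (x - b)) := by
            rcases le_total (Kker N β r (x - a)) (Kker N β s (x - b)) with h | h
            · rw [min_eq_left h]
              exact mul_le_mul_of_nonneg_left (le_add_of_nonneg_left hu) hu
            · rw [min_eq_right h, mul_comm]
              exact mul_le_mul_of_nonneg_left (le_add_of_nonneg_right hv) hv
          exact step1.trans (mul_le_mul_of_nonneg_right hmin (add_nonneg hu hv))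
    _ = M * (I + I) := by
        rw [integral_const_mul, integral_add hint_a hint_b,
          integral_sub_right_eq_self (Kker N β r) a,
          integral_sub_right_eq_self (Kker N β s) b,
          Kker_integral hN hβ hr, Kker_integral hN hβ hs, ← hI']
    _ ≤ 2 ^ (p + 1) * (2 * I + 1) * (r + s) ^ β /
          ((r + s) ^ p + ‖a - b‖ ^ p) := by
        rw [mul_div_assoc]
        calc M * (I + I)
            = (2 * I) * (2 ^ (p + 1) * ((r + s) ^ β / ((r + s) ^ p + ‖a - b‖ ^ p))) := by
              rw [hM']; ring
          _ ≤ (2 * I + 1) * (2 ^ (p + 1) * ((r + s) ^ β / ((r + s) ^ p + ‖a - b‖ ^ p))) :=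
              mul_le_mul_of_nonneg_right (by linarith) (mul_nonneg h2p1.le hfrac)
          _ = 2 ^ (p + 1) * (2 * I + 1) * ((r + s) ^ β / ((r + s) ^ p + ‖a - b‖ ^ p)) := by
              ring
end

section
/- Let N ≥ 1 be an integer and β > 0. There is a constant c such that for all r > 0 and a ∈ ℝ^N with |a| ≥ 1 + r, ∫_{ℝ^N} r^β / ((r^{N+β} + |x−a|^{N+β})(1 + |x|^{N+β})) dx ≤ c (1+r)^β / |a|^{N+β}. -/
open MeasureTheory Set

lemma aux_one_add_rpow_int {N : ℕ} {d : ℝ} (hd : (N : ℝ) < d) (hd0 : 0 < d) :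
    Integrable (fun x : EuclideanSpace ℝ (Fin N) => (1 + ‖x‖ ^ d)⁻¹) := by
  have hNd : (Module.finrank ℝ (EuclideanSpace ℝ (Fin N)) : ℝ) < d := by
    rw [finrank_euclideanSpace_fin]; exact hd
  have h_int := (integrable_one_add_norm (μ := (volume : Measure (EuclideanSpace ℝ (Fin N)))) hNd).const_mul ((2:ℝ) ^ d)
  refine h_int.mono' ?_ (Filter.Eventually.of_forall fun x => ?_)
  · refine (Measurable.aestronglyMeasurable ?_)
    fun_prop
  · have hx : (0:ℝ) ≤ ‖x‖ := norm_nonneg x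
    have key : (1 + ‖x‖) ^ d ≤ 2 ^ d * (1 + ‖x‖ ^ d) := by
      have h1 : 1 + ‖x‖ ≤ 2 * max 1 ‖x‖ := by
        rcases le_total ‖x‖ 1 with h | h
        · rw [max_eq_left h]; linarith
        · rw [max_eq_right h]; linarith
      calc (1 + ‖x‖) ^ d ≤ (2 * max 1 ‖x‖) ^ d := by
            apply Real.rpow_le_rpow (by positivity) h1 hd0.le
        _ = 2 ^ d * (max 1 ‖x‖) ^ d := Real.mul_rpow (by norm_num) (by positivity)
        _ ≤ 2 ^ d * (1 + ‖x‖ ^ d) := by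
            apply mul_le_mul_of_nonneg_left _ (by positivity)
            rcases le_total ‖x‖ 1 with h | h
            · rw [max_eq_left h, Real.one_rpow]
              have := Real.rpow_nonneg hx d
              linarith
            · rw [max_eq_right h]
              have : (1:ℝ) ≤ ‖x‖ ^ d := Real.one_le_rpow h hd0.le
              linarith
    have h1x : (0:ℝ) < 1 + ‖x‖ ^ d := by positivity
    have h1xx : (0:ℝ) < (1 + ‖x‖) ^ d := by positivity
    rw [Real.norm_eq_abs, abs_of_nonneg (by positivity), Real.rpow_neg (by positivity)]
    have key2 : (1 + ‖x‖) ^ d / 2 ^ d ≤ 1 + ‖x‖ ^ d := by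
      rw [div_le_iff₀ (by positivity : (0:ℝ) < (2:ℝ) ^ d)]
      linarith [key]
    calc (1 + ‖x‖ ^ d)⁻¹ ≤ ((1 + ‖x‖) ^ d / 2 ^ d)⁻¹ :=
          inv_anti₀ (by positivity) key2
      _ = 2 ^ d * ((1 + ‖x‖) ^ d)⁻¹ := by
          rw [inv_div]; ring

/-- For `N ≥ 1`, `β > 0`, there is `c` such that for all `r > 0` and `a ∈ ℝ^N` with
`|a| ≥ 1 + r`,
`∫ r^β / ((r^{N+β}+|x-a|^{N+β})(1+|x|^{N+β})) dx ≤ c (1+r)^β / |a|^{N+β}`. -/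
theorem stmt_5 (N : ℕ) (hN : 1 ≤ N) (β : ℝ) (hβ : 0 < β) :
    ∃ c : ℝ, 0 < c ∧ ∀ (a : EuclideanSpace ℝ (Fin N)) (r : ℝ), 0 < r → 1 + r ≤ ‖a‖ →
      (∫ x : EuclideanSpace ℝ (Fin N),
          r ^ β /
            ((r ^ ((N : ℝ) + β) + ‖x - a‖ ^ ((N : ℝ) + β)) * (1 + ‖x‖ ^ ((N : ℝ) + β))))
        ≤ c * (1 + r) ^ β / ‖a‖ ^ ((N : ℝ) + β) := by
  set d : ℝ := (N : ℝ) + β with hd_def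
  have hd0 : 0 < d := by positivity
  have hNd : (N : ℝ) < d := by simp [hd_def]; linarith
  have h_int : Integrable (fun x : EuclideanSpace ℝ (Fin N) => (1 + ‖x‖ ^ d)⁻¹) :=
    aux_one_add_rpow_int hNd hd0
  set C₀ : ℝ := ∫ x : EuclideanSpace ℝ (Fin N), (1 + ‖x‖ ^ d)⁻¹ with hC
  have hC₀pos : 0 < C₀ := by
    rw [hC]
    rw [integral_pos_iff_support_of_nonneg (fun x => by positivity) h_int]
    have : Function.support (fun x : EuclideanSpace ℝ (Fin N) => (1 + ‖x‖ ^ d)⁻¹) = univ := by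
      ext x; simp only [Function.mem_support, mem_univ, iff_true]
      positivity
    rw [this]
    simpa using (NeZero.ne (volume : Measure (EuclideanSpace ℝ (Fin N))))
  refine ⟨2 * 2 ^ d * C₀, by positivity, ?_⟩
  intro a r hr ha
  have ha1 : (1:ℝ) < ‖a‖ := lt_of_lt_of_le (by linarith) ha
  have hapos : (0:ℝ) < ‖a‖ := by linarith
  -- the scaled/translated function
  set F : EuclideanSpace ℝ (Fin N) → ℝ := fun y => r ^ β / (r ^ d + ‖y‖ ^ d) with hF
  have hFscale : ∀ z : EuclideanSpace ℝ (Fin N),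
      F (r • z) = (r ^ (N:ℕ))⁻¹ * (1 + ‖z‖ ^ d)⁻¹ := by
    intro z
    have : ‖r • z‖ ^ d = r ^ d * ‖z‖ ^ d := by
      rw [norm_smul, Real.norm_eq_abs, abs_of_pos hr,
        Real.mul_rpow hr.le (norm_nonneg z)]
    rw [hF]
    simp only [this]
    rw [div_eq_mul_inv]
    have hden : r ^ d + r ^ d * ‖z‖ ^ d = r ^ d * (1 + ‖z‖ ^ d) := by ring
    rw [hden, mul_inv, ← mul_assoc]
    congr 1
    rw [← Real.rpow_neg hr.le, ← Real.rpow_add hr, ← Real.rpow_natCast r N,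
      ← Real.rpow_neg hr.le]
    congr 1
    rw [hd_def]; ring
  have hFint : Integrable F := by
    have h1 : Integrable (fun z : EuclideanSpace ℝ (Fin N) => F (r • z)) := by
      simp only [hFscale]
      exact h_int.const_mul _
    exact (integrable_comp_smul_iff volume F (ne_of_gt hr)).mp h1
  have hFint' : Integrable (fun x : EuclideanSpace ℝ (Fin N) => F (x - a)) :=
    hFint.comp_sub_right a
  have hFval : (∫ y : EuclideanSpace ℝ (Fin N), F y) = C₀ := by
    have hrN : (0:ℝ) < r ^ (N:ℕ) := by positivity
    have h := Measure.integral_comp_smul (volume : Measure (EuclideanSpace ℝ (Fin N))) F r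
    rw [finrank_euclideanSpace_fin] at h
    simp only [hFscale] at h
    rw [integral_const_mul, abs_of_pos (inv_pos.2 hrN), smul_eq_mul] at h
    exact (mul_left_cancel₀ (inv_ne_zero hrN.ne') h).symm
  set K : ℝ := 2 ^ d * (1 + r) ^ β / ‖a‖ ^ d with hK
  have hFval' : (∫ x : EuclideanSpace ℝ (Fin N), F (x - a)) = C₀ := by
    rw [integral_sub_right_eq_self F a, hFval]
  have had : (0:ℝ) < ‖a‖ ^ d := Real.rpow_pos_of_pos hapos d
  have h2d : (0:ℝ) < (2:ℝ) ^ d := Real.rpow_pos_of_pos (by norm_num) d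
  have hKpos : 0 < K := by
    rw [hK]
    have := Real.rpow_pos_of_pos (show (0:ℝ) < 1 + r by linarith) β
    positivity
  have hrb : r ^ β ≤ (1 + r) ^ β := Real.rpow_le_rpow hr.le (by linarith) hβ.le
  have h1rb : (1:ℝ) ≤ (1 + r) ^ β := Real.one_le_rpow (by linarith) hβ.le
  have hpt : ∀ x : EuclideanSpace ℝ (Fin N),
      r ^ β / ((r ^ d + ‖x - a‖ ^ d) * (1 + ‖x‖ ^ d))
        ≤ K * ((1 + ‖x‖ ^ d)⁻¹ + F (x - a)) := by
    intro x
    have h1xd : (0:ℝ) < 1 + ‖x‖ ^ d := by positivity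
    have hrden : (0:ℝ) < r ^ d + ‖x - a‖ ^ d := by
      have := Real.rpow_pos_of_pos hr d
      positivity
    have hF0 : 0 ≤ F (x - a) := by rw [hF]; positivity
    have hinv0 : (0:ℝ) ≤ (1 + ‖x‖ ^ d)⁻¹ := by positivity
    have htri : ‖a‖ ≤ ‖x‖ + ‖x - a‖ := by
      calc ‖a‖ = ‖x - (x - a)‖ := by rw [sub_sub_cancel]
        _ ≤ ‖x‖ + ‖x - a‖ := norm_sub_le _ _
    rcases le_or_gt (‖a‖ / 2) ‖x - a‖ with hcase | hcase
    · -- ‖x - a‖ is large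
      have hA : ‖a‖ ^ d / 2 ^ d ≤ r ^ d + ‖x - a‖ ^ d := by
        have h1 : (‖a‖ / 2) ^ d ≤ ‖x - a‖ ^ d :=
          Real.rpow_le_rpow (by positivity) hcase hd0.le
        rw [Real.div_rpow hapos.le (by norm_num)] at h1
        have := Real.rpow_nonneg hr.le d
        linarith
      have step : r ^ β / ((r ^ d + ‖x - a‖ ^ d) * (1 + ‖x‖ ^ d))
          ≤ (1 + r) ^ β / ((‖a‖ ^ d / 2 ^ d) * (1 + ‖x‖ ^ d)) := by
        apply div_le_div₀ (by positivity) hrb (by positivity)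
        exact mul_le_mul_of_nonneg_right hA h1xd.le
      refine step.trans ?_
      have e1 : (1 + r) ^ β / ((‖a‖ ^ d / 2 ^ d) * (1 + ‖x‖ ^ d))
          = K * (1 + ‖x‖ ^ d)⁻¹ := by
        rw [hK]
        field_simp
      rw [e1]
      exact le_add_of_nonneg_right (by positivity) |>.trans_eq (mul_add K _ _).symm
    · -- ‖x‖ is large
      have hxbig : ‖a‖ / 2 ≤ ‖x‖ := by linarith
      have hB : ‖a‖ ^ d / 2 ^ d ≤ 1 + ‖x‖ ^ d := by
        have h1 : (‖a‖ / 2) ^ d ≤ ‖x‖ ^ d :=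
          Real.rpow_le_rpow (by positivity) hxbig hd0.le
        rw [Real.div_rpow hapos.le (by norm_num)] at h1
        linarith
      have step : r ^ β / ((r ^ d + ‖x - a‖ ^ d) * (1 + ‖x‖ ^ d))
          ≤ r ^ β / ((r ^ d + ‖x - a‖ ^ d) * (‖a‖ ^ d / 2 ^ d)) := by
        apply div_le_div₀ (Real.rpow_nonneg hr.le β) le_rfl (by positivity)
        exact mul_le_mul_of_nonneg_left hB hrden.le
      refine step.trans ?_
      have e1 : r ^ β / ((r ^ d + ‖x - a‖ ^ d) * (‖a‖ ^ d / 2 ^ d))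
          = 2 ^ d / ‖a‖ ^ d * (r ^ β / (r ^ d + ‖x - a‖ ^ d)) := by
        field_simp
      have e2 : K * F (x - a) = 2 ^ d * (1 + r) ^ β / ‖a‖ ^ d
          * (r ^ β / (r ^ d + ‖x - a‖ ^ d)) := by rw [hK, hF]
      have step2 : 2 ^ d / ‖a‖ ^ d * (r ^ β / (r ^ d + ‖x - a‖ ^ d)) ≤ K * F (x - a) := by
        rw [e2]
        apply mul_le_mul_of_nonneg_right _ (by positivity)
        rw [div_le_div_iff₀ had had]
        nlinarith [mul_nonneg (mul_pos h2d had).le (sub_nonneg.2 h1rb)]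
      rw [e1]
      refine step2.trans ?_
      rw [mul_add]
      exact le_add_of_nonneg_left (mul_nonneg hKpos.le hinv0)
  have hg_int : Integrable
      (fun x : EuclideanSpace ℝ (Fin N) => K * ((1 + ‖x‖ ^ d)⁻¹ + F (x - a))) :=
    (h_int.add hFint').const_mul K
  have hmono := integral_mono_of_nonneg
    (Filter.Eventually.of_forall fun x : EuclideanSpace ℝ (Fin N) => by positivity)
    hg_int (Filter.Eventually.of_forall hpt)
  calc (∫ x : EuclideanSpace ℝ (Fin N),
        r ^ β / ((r ^ d + ‖x - a‖ ^ d) * (1 + ‖x‖ ^ d)))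
      ≤ ∫ x : EuclideanSpace ℝ (Fin N), K * ((1 + ‖x‖ ^ d)⁻¹ + F (x - a)) := hmono
    _ = K * (C₀ + C₀) := by rw [integral_const_mul, integral_add h_int hFint', hFval', hC]
    _ = 2 * 2 ^ d * C₀ * (1 + r) ^ β / ‖a‖ ^ d := by rw [hK]; ring
end

section
/- Let α > 0 and 0 ≤ r < 1/2. The integral operator on L²((0,∞)) with kernel k(x,y) = ((max{x,y})/√(xy))^{2r} · (max{x,y})^α / (max{|x−y|, min{x,y}})^{1+α} is bounded on L²((0,∞)). -/
open MeasureTheory Set ENNReal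

section aux

lemma aux_half_le_M {x y : ℝ} (hx : 0 < x) (hy : 0 < y) :
    max x y / 2 ≤ max |x - y| (min x y) := by
  rcases le_or_gt (min x y) (max x y / 2) with h | h
  · refine le_trans ?_ (le_max_left _ _)
    rcases le_total x y with hxy | hxy
    · rw [max_eq_right hxy] at *
      rw [min_eq_left hxy] at h
      rw [abs_sub_comm, abs_of_nonneg (by linarith)]
      linarith
    · rw [max_eq_left hxy] at *
      rw [min_eq_right hxy] at h
      rw [abs_of_nonneg (by linarith)]
      linarith
  · exact le_trans h.le (le_max_right _ _)

lemma aux_kernel_bound {α r : ℝ} (hα : 0 < α) {x y : ℝ} (hx : 0 < x) (hy : 0 < y) :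
    (max x y / Real.sqrt (x * y)) ^ (2 * r) * (max x y) ^ α /
        (max |x - y| (min x y)) ^ (1 + α)
      ≤ 2 ^ (1 + α) * (x ^ (-r) * y ^ (-r) * max x y ^ (2*r - 1)) := by
  have hm : 0 < max x y := lt_max_of_lt_left hx
  have hxy : 0 < x * y := mul_pos hx hy
  have hsq : Real.sqrt (x * y) ^ (2 * r) = (x * y) ^ r := by
    rw [Real.sqrt_eq_rpow, ← Real.rpow_mul hxy.le, show 1/2*(2*r) = r by ring]
  have step1 : (max x y / Real.sqrt (x * y)) ^ (2 * r) * (max x y) ^ α /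
        (max |x - y| (min x y)) ^ (1 + α)
      ≤ (max x y / Real.sqrt (x * y)) ^ (2 * r) * (max x y) ^ α /
        (max x y / 2) ^ (1 + α) := by
    have h2 : (max x y / 2) ^ (1 + α) ≤ (max |x - y| (min x y)) ^ (1 + α) :=
      Real.rpow_le_rpow (by positivity) (aux_half_le_M hx hy) (by linarith)
    exact div_le_div_of_nonneg_left (by positivity) (by positivity) h2
  refine step1.trans (le_of_eq ?_)
  rw [Real.div_rpow hm.le (Real.sqrt_nonneg _), hsq,
    Real.div_rpow hm.le (by norm_num : (0:ℝ) ≤ 2),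
    Real.mul_rpow hx.le hy.le,
    Real.rpow_neg hx.le, Real.rpow_neg hy.le,
    show 2*r - 1 = 2*r + α - (1+α) by ring,
    Real.rpow_sub hm, Real.rpow_add hm]
  have p1 : (0:ℝ) < max x y ^ (2*r) := Real.rpow_pos_of_pos hm _
  have p2 : (0:ℝ) < max x y ^ α := Real.rpow_pos_of_pos hm _
  have p3 : (0:ℝ) < max x y ^ (1+α) := Real.rpow_pos_of_pos hm _
  have p4 : (0:ℝ) < x ^ r := Real.rpow_pos_of_pos hx _
  have p5 : (0:ℝ) < y ^ r := Real.rpow_pos_of_pos hy _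
  have p6 : (0:ℝ) < (2:ℝ) ^ (1+α) := Real.rpow_pos_of_pos (by norm_num) _
  field_simp
  rw [Real.rpow_add hm]

lemma aux_intpart1 {r : ℝ} (hr : r < 1/2) {x : ℝ} (hx : 0 < x) :
    IntegrableOn (fun y : ℝ => y ^ (-r - 1/2) * max x y ^ (2*r - 1)) (Ioc 0 x) := by
  have h1 : IntegrableOn (fun y : ℝ => y ^ (-r - 1/2)) (Ioc 0 x) := by
    have := intervalIntegral.intervalIntegrable_rpow' (a := 0) (b := x) (r := -r - 1/2)
      (by linarith)
    rwa [intervalIntegrable_iff, uIoc_of_le hx.le] at this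
  refine IntegrableOn.congr_fun (h1.mul_const (x ^ (2*r-1))) (fun y hy => ?_) measurableSet_Ioc
  simp [max_eq_left hy.2]

lemma aux_intpart2 {r : ℝ} (hr : r < 1/2) {x : ℝ} (hx : 0 < x) :
    IntegrableOn (fun y : ℝ => y ^ (-r - 1/2) * max x y ^ (2*r - 1)) (Ioi x) := by
  refine IntegrableOn.congr_fun (integrableOn_Ioi_rpow_of_lt (a := r - 3/2) (by linarith) hx)
    (fun y hy => ?_) measurableSet_Ioi
  have hy0 : 0 < y := hx.trans hy
  rw [max_eq_right (le_of_lt hy), ← Real.rpow_add hy0]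
  ring_nf

lemma aux_schur_int {r : ℝ} (hr : r < 1/2) {x : ℝ} (hx : 0 < x) :
    ∫ y in Ioi (0:ℝ), y ^ (-r - 1/2) * max x y ^ (2*r - 1)
      = (2/(1/2 - r)) * x ^ (r - 1/2) := by
  rw [← Ioc_union_Ioi_eq_Ioi hx.le,
    setIntegral_union (Ioc_disjoint_Ioi le_rfl) measurableSet_Ioi (aux_intpart1 hr hx)
      (aux_intpart2 hr hx)]
  have e1 : ∫ y in Ioc (0:ℝ) x, y ^ (-r - 1/2) * max x y ^ (2*r - 1)
      = (x ^ (1/2 - r) / (1/2 - r)) * x ^ (2*r - 1) := by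
    rw [setIntegral_congr_fun measurableSet_Ioc
      (g := fun y : ℝ => y ^ (-r - 1/2) * x ^ (2*r - 1)) (fun y hy => by simp [max_eq_left hy.2])]
    rw [integral_mul_const, ← intervalIntegral.integral_of_le hx.le,
      integral_rpow (Or.inl (by linarith))]
    rw [Real.zero_rpow (by intro h; linarith [h])]
    ring_nf
  have e2 : ∫ y in Ioi x, y ^ (-r - 1/2) * max x y ^ (2*r - 1)
      = x ^ (r - 1/2) / (1/2 - r) := by
    rw [setIntegral_congr_fun measurableSet_Ioi
      (g := fun y : ℝ => y ^ (r - 3/2)) (fun y hy => by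
        have hy0 : 0 < y := hx.trans hy
        rw [max_eq_right (le_of_lt hy), ← Real.rpow_add hy0]; ring_nf)]
    rw [integral_Ioi_rpow_of_lt (by linarith) hx,
      show r - 3/2 + 1 = r - 1/2 by ring, neg_div, ← div_neg,
      show -(r - 1/2) = 1/2 - r by ring]
  rw [e1, e2, div_mul_eq_mul_div, ← Real.rpow_add hx,
    show 1/2 - r + (2*r - 1) = r - 1/2 by ring]
  ring

lemma aux_schur_lint {r : ℝ} (hr : r < 1/2) {x : ℝ} (hx : 0 < x) :
    ∫⁻ y in Ioi (0:ℝ), ENNReal.ofReal (y ^ (-r - 1/2) * max x y ^ (2*r - 1))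
      = ENNReal.ofReal ((2/(1/2 - r)) * x ^ (r - 1/2)) := by
  rw [← ofReal_integral_eq_lintegral_ofReal]
  · rw [aux_schur_int hr hx]
  · rw [← Ioc_union_Ioi_eq_Ioi hx.le]
    exact (aux_intpart1 hr hx).union (aux_intpart2 hr hx)
  · refine (ae_restrict_iff' measurableSet_Ioi).2 (ae_of_all _ fun y hy => ?_)
    have hy0 : (0:ℝ) < y := hy
    have hm : 0 < max x y := lt_max_of_lt_left hx
    positivity

/-- The dominating kernel. -/
noncomputable def auxW (α r x y : ℝ) : ℝ≥0∞ :=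
  ENNReal.ofReal ((2:ℝ) ^ (1 + α) * (x ^ (-r) * y ^ (-r) * max x y ^ (2*r - 1)))

lemma auxW_meas (α r : ℝ) : Measurable fun p : ℝ × ℝ => auxW α r p.1 p.2 := by
  unfold auxW
  have hmax : Measurable fun p : ℝ × ℝ => max p.1 p.2 := measurable_fst.max measurable_snd
  fun_prop

lemma auxWt_meas (α r : ℝ) : Measurable fun p : ℝ × ℝ =>
    auxW α r p.1 p.2 * ENNReal.ofReal (p.1 ^ ((1:ℝ)/2) * p.2 ^ (-((1:ℝ)/2))) := by
  unfold auxW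
  have hmax : Measurable fun p : ℝ × ℝ => max p.1 p.2 := measurable_fst.max measurable_snd
  fun_prop

lemma auxWt_meas_right (α r x : ℝ) : Measurable fun y : ℝ =>
    auxW α r x y * ENNReal.ofReal (x ^ ((1:ℝ)/2) * y ^ (-((1:ℝ)/2))) := by
  unfold auxW
  fun_prop

lemma auxW_symm (α r x y : ℝ) : auxW α r x y = auxW α r y x := by
  unfold auxW
  rw [max_comm]
  ring_nf

lemma auxW_ne_top (α r x y : ℝ) : auxW α r x y ≠ ⊤ := ofReal_ne_top

lemma auxW_ne_zero {α r x y : ℝ} (hα : 0 < α) (hx : 0 < x) (hy : 0 < y) :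
    auxW α r x y ≠ 0 := by
  have hm : 0 < max x y := lt_max_of_lt_left hx
  have h2 : (0:ℝ) < 2 ^ (1 + α) := Real.rpow_pos_of_pos (by norm_num) _
  have : (0:ℝ) < (2:ℝ) ^ (1 + α) * (x ^ (-r) * y ^ (-r) * max x y ^ (2*r - 1)) := by
    positivity
  exact (ofReal_pos.2 this).ne'

/-- The weighted Schur integral of the dominating kernel. -/
lemma auxW_lint {α r : ℝ} (hα : 0 < α) (hr : r < 1/2) {x : ℝ} (hx : 0 < x) :
    ∫⁻ y in Ioi (0:ℝ), auxW α r x y * ENNReal.ofReal (x ^ ((1:ℝ)/2) * y ^ (-((1:ℝ)/2)))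
      = ENNReal.ofReal ((2:ℝ) ^ (1 + α) * (2/(1/2 - r))) := by
  have h2 : (0:ℝ) < 2 ^ (1 + α) := Real.rpow_pos_of_pos (by norm_num) _
  have key : ∀ y ∈ Ioi (0:ℝ),
      auxW α r x y * ENNReal.ofReal (x ^ ((1:ℝ)/2) * y ^ (-((1:ℝ)/2)))
        = ENNReal.ofReal ((2:ℝ) ^ (1 + α) * x ^ (1/2 - r))
            * ENNReal.ofReal (y ^ (-r - 1/2) * max x y ^ (2*r - 1)) := by
    intro y hy
    have hy0 : (0:ℝ) < y := hy
    have hm : 0 < max x y := lt_max_of_lt_left hx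
    unfold auxW
    rw [← ENNReal.ofReal_mul (by positivity), ← ENNReal.ofReal_mul (by positivity)]
    congr 1
    rw [show (1:ℝ)/2 - r = -r + 1/2 by ring, Real.rpow_add hx,
      show -r - 1/2 = -r + -(1/2) by ring, Real.rpow_add hy0]
    ring
  rw [setLIntegral_congr_fun measurableSet_Ioi key,
    lintegral_const_mul _ (by fun_prop),
    aux_schur_lint hr hx, ← ENNReal.ofReal_mul (by positivity)]
  congr 1
  rw [show (2:ℝ) ^ (1 + α) * x ^ (1/2 - r) * (2/(1/2 - r) * x ^ (r - 1/2))
      = (2:ℝ) ^ (1 + α) * (2/(1/2 - r)) * (x ^ (1/2 - r) * x ^ (r - 1/2)) by ring,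
    ← Real.rpow_add hx, show 1/2 - r + (r - 1/2) = 0 by ring, Real.rpow_zero, mul_one]

set_option maxHeartbeats 1000000 in
/-- The key squared-weight integral. -/
lemma aux_key {α r : ℝ} (hα : 0 < α) (hr : r < 1/2) (h : ℝ → ℝ≥0∞) (mh : Measurable h) :
    ∫⁻ p : ℝ × ℝ,
        ((auxW α r p.1 p.2 * ENNReal.ofReal (p.1 ^ ((1:ℝ)/2) * p.2 ^ (-((1:ℝ)/2)))) ^ ((1:ℝ)/2)
          * h p.1) ^ (2:ℝ)
        ∂((volume.restrict (Ioi (0:ℝ))).prod (volume.restrict (Ioi (0:ℝ))))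
      = ENNReal.ofReal ((2:ℝ) ^ (1 + α) * (2/(1/2 - r))) * ∫⁻ x in Ioi (0:ℝ), h x ^ 2 := by
  have mWt := auxWt_meas α r
  have ptwise : ∀ p : ℝ × ℝ,
      ((auxW α r p.1 p.2 * ENNReal.ofReal (p.1 ^ ((1:ℝ)/2) * p.2 ^ (-((1:ℝ)/2)))) ^ ((1:ℝ)/2)
          * h p.1) ^ (2:ℝ)
        = (auxW α r p.1 p.2 * ENNReal.ofReal (p.1 ^ ((1:ℝ)/2) * p.2 ^ (-((1:ℝ)/2))))
            * h p.1 ^ 2 := by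
    intro p
    rw [ENNReal.mul_rpow_of_nonneg _ _ (by norm_num : (0:ℝ) ≤ 2),
      ← ENNReal.rpow_mul, show (1:ℝ)/2 * 2 = 1 by norm_num, ENNReal.rpow_one,
      show (2:ℝ) = ((2:ℕ):ℝ) by norm_num, ENNReal.rpow_natCast]
  simp only [ptwise]
  have mint : Measurable fun p : ℝ × ℝ =>
      auxW α r p.1 p.2 * ENNReal.ofReal (p.1 ^ ((1:ℝ)/2) * p.2 ^ (-((1:ℝ)/2))) * h p.1 ^ 2 := by
    have := auxWt_meas α r
    fun_prop
  rw [lintegral_prod _ mint.aemeasurable]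
  have inner : ∀ x : ℝ,
      (∫⁻ y in Ioi (0:ℝ),
        auxW α r x y * ENNReal.ofReal (x ^ ((1:ℝ)/2) * y ^ (-((1:ℝ)/2))) * h x ^ 2)
      = (∫⁻ y in Ioi (0:ℝ),
          auxW α r x y * ENNReal.ofReal (x ^ ((1:ℝ)/2) * y ^ (-((1:ℝ)/2)))) * h x ^ 2 := by
    intro x
    exact lintegral_mul_const _ (auxWt_meas_right α r x)
  simp only [inner]
  rw [setLIntegral_congr_fun measurableSet_Ioi
    (fun x hx => by rw [auxW_lint hα hr hx]),
    lintegral_const_mul _ (mh.pow_const 2)]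

end aux

/-- The integral operator on `L²((0,∞))` with kernel
`k(x,y) = (max{x,y}/√(xy))^{2r} (max{x,y})^α / (max{|x-y|, min{x,y}})^{1+α}`
is bounded on `L²((0,∞))`, for `α > 0` and `0 ≤ r < 1/2`. Boundedness is expressed via
the bilinear form bound `∬ k f g ≤ C ‖f‖₂ ‖g‖₂` for nonnegative `f, g`. -/
theorem stmt_9 (α r : ℝ) (hα : 0 < α) (hr0 : 0 ≤ r) (hr : r < 1 / 2) :
    ∃ C : ℝ, 0 < C ∧ ∀ f g : ℝ → ℝ≥0∞, Measurable f → Measurable g →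
      (∫⁻ x in Ioi (0:ℝ), ∫⁻ y in Ioi (0:ℝ),
          ENNReal.ofReal
            ((max x y / Real.sqrt (x * y)) ^ (2 * r) * (max x y) ^ α /
              (max |x - y| (min x y)) ^ (1 + α)) * f x * g y)
        ≤ ENNReal.ofReal C * (∫⁻ x in Ioi (0:ℝ), f x ^ 2) ^ ((1:ℝ)/2)
            * (∫⁻ y in Ioi (0:ℝ), g y ^ 2) ^ ((1:ℝ)/2) := by
  have hr' : r < 1/2 := by linarith
  have hC : (0:ℝ) < (2:ℝ) ^ (1 + α) * (2/(1/2 - r)) := by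
    have h2 : (0:ℝ) < 2 ^ (1 + α) := Real.rpow_pos_of_pos (by norm_num) _
    have hS : (0:ℝ) < 2 / (1/2 - r) := div_pos (by norm_num) (by linarith)
    positivity
  refine ⟨(2:ℝ) ^ (1 + α) * (2/(1/2 - r)), hC, fun f g mf mg => ?_⟩
  -- step 1: domination by auxW
  have step1 : (∫⁻ x in Ioi (0:ℝ), ∫⁻ y in Ioi (0:ℝ),
          ENNReal.ofReal
            ((max x y / Real.sqrt (x * y)) ^ (2 * r) * (max x y) ^ α /
              (max |x - y| (min x y)) ^ (1 + α)) * f x * g y)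
      ≤ ∫⁻ x in Ioi (0:ℝ), ∫⁻ y in Ioi (0:ℝ), auxW α r x y * f x * g y := by
    refine setLIntegral_mono ?_ fun x hx => ?_
    · exact Measurable.lintegral_prod_right
        (((auxW_meas α r).mul (mf.comp measurable_fst)).mul (mg.comp measurable_snd))
    · refine setLIntegral_mono
        ((((auxW_meas α r).comp (measurable_const.prodMk measurable_id)).mul
          measurable_const).mul mg) fun y hy => ?_
      exact mul_le_mul' (mul_le_mul'
        (ofReal_le_ofReal (aux_kernel_bound hα hx hy)) le_rfl) le_rfl
  refine step1.trans ?_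
  -- move to the product measure
  set π : Measure (ℝ × ℝ) := (volume.restrict (Ioi (0:ℝ))).prod (volume.restrict (Ioi (0:ℝ)))
    with hπ_def
  have mF : Measurable fun p : ℝ × ℝ => auxW α r p.1 p.2 * f p.1 * g p.2 :=
    ((auxW_meas α r).mul (mf.comp measurable_fst)).mul (mg.comp measurable_snd)
  rw [show (∫⁻ x in Ioi (0:ℝ), ∫⁻ y in Ioi (0:ℝ), auxW α r x y * f x * g y)
      = ∫⁻ p : ℝ × ℝ, auxW α r p.1 p.2 * f p.1 * g p.2 ∂π from
    (lintegral_prod _ mF.aemeasurable).symm]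
  -- factorization
  set u : ℝ × ℝ → ℝ≥0∞ := fun p =>
    (auxW α r p.1 p.2 * ENNReal.ofReal (p.1 ^ ((1:ℝ)/2) * p.2 ^ (-((1:ℝ)/2)))) ^ ((1:ℝ)/2)
      * f p.1 with hu_def
  set v : ℝ × ℝ → ℝ≥0∞ := fun p =>
    (auxW α r p.1 p.2 * ENNReal.ofReal (p.1 ^ (-((1:ℝ)/2)) * p.2 ^ ((1:ℝ)/2))) ^ ((1:ℝ)/2)
      * g p.2 with hv_def
  have hfac : ∀ᵐ p ∂π, auxW α r p.1 p.2 * f p.1 * g p.2 = (u * v) p := by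
    rw [hπ_def, Measure.prod_restrict]
    refine (ae_restrict_iff' (measurableSet_Ioi.prod measurableSet_Ioi)).2
      (ae_of_all _ fun p hp => ?_)
    have hx : (0:ℝ) < p.1 := hp.1
    have hy : (0:ℝ) < p.2 := hp.2
    have hT : ENNReal.ofReal (p.1 ^ ((1:ℝ)/2) * p.2 ^ (-((1:ℝ)/2)))
        * ENNReal.ofReal (p.1 ^ (-((1:ℝ)/2)) * p.2 ^ ((1:ℝ)/2)) = 1 := by
      rw [← ENNReal.ofReal_mul (by positivity),
        show (p.1 ^ ((1:ℝ)/2) * p.2 ^ (-((1:ℝ)/2))) * (p.1 ^ (-((1:ℝ)/2)) * p.2 ^ ((1:ℝ)/2))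
          = (p.1 ^ ((1:ℝ)/2) * p.1 ^ (-((1:ℝ)/2))) * (p.2 ^ (-((1:ℝ)/2)) * p.2 ^ ((1:ℝ)/2))
          by ring,
        ← Real.rpow_add hx, ← Real.rpow_add hy]
      norm_num
    have hW : (auxW α r p.1 p.2 * ENNReal.ofReal (p.1 ^ ((1:ℝ)/2) * p.2 ^ (-((1:ℝ)/2))))
          ^ ((1:ℝ)/2)
        * (auxW α r p.1 p.2 * ENNReal.ofReal (p.1 ^ (-((1:ℝ)/2)) * p.2 ^ ((1:ℝ)/2)))
          ^ ((1:ℝ)/2)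
        = auxW α r p.1 p.2 := by
      rw [← ENNReal.mul_rpow_of_nonneg _ _ (by norm_num : (0:ℝ) ≤ 1/2),
        show (auxW α r p.1 p.2 * ENNReal.ofReal (p.1 ^ ((1:ℝ)/2) * p.2 ^ (-((1:ℝ)/2))))
            * (auxW α r p.1 p.2 * ENNReal.ofReal (p.1 ^ (-((1:ℝ)/2)) * p.2 ^ ((1:ℝ)/2)))
          = auxW α r p.1 p.2 * auxW α r p.1 p.2
            * (ENNReal.ofReal (p.1 ^ ((1:ℝ)/2) * p.2 ^ (-((1:ℝ)/2)))
              * ENNReal.ofReal (p.1 ^ (-((1:ℝ)/2)) * p.2 ^ ((1:ℝ)/2))) by ring,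
        hT, mul_one,
        show auxW α r p.1 p.2 * auxW α r p.1 p.2 = auxW α r p.1 p.2 ^ (2:ℝ) by
          rw [show (2:ℝ) = ((2:ℕ):ℝ) by norm_num, ENNReal.rpow_natCast]; ring,
        ← ENNReal.rpow_mul]
      norm_num
    simp only [hu_def, hv_def, Pi.mul_apply]
    rw [show (auxW α r p.1 p.2 * ENNReal.ofReal (p.1 ^ ((1:ℝ)/2) * p.2 ^ (-((1:ℝ)/2))))
            ^ ((1:ℝ)/2) * f p.1
          * ((auxW α r p.1 p.2 * ENNReal.ofReal (p.1 ^ (-((1:ℝ)/2)) * p.2 ^ ((1:ℝ)/2)))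
            ^ ((1:ℝ)/2) * g p.2)
        = (auxW α r p.1 p.2 * ENNReal.ofReal (p.1 ^ ((1:ℝ)/2) * p.2 ^ (-((1:ℝ)/2))))
            ^ ((1:ℝ)/2)
          * (auxW α r p.1 p.2 * ENNReal.ofReal (p.1 ^ (-((1:ℝ)/2)) * p.2 ^ ((1:ℝ)/2)))
            ^ ((1:ℝ)/2) * f p.1 * g p.2 by ring, hW]
  rw [lintegral_congr_ae hfac]
  -- Cauchy-Schwarz
  have mT : Measurable fun p : ℝ × ℝ =>
      ENNReal.ofReal (p.1 ^ ((1:ℝ)/2) * p.2 ^ (-((1:ℝ)/2))) :=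
    ENNReal.measurable_ofReal.comp
      ((measurable_fst.pow measurable_const).mul (measurable_snd.pow measurable_const))
  have mT' : Measurable fun p : ℝ × ℝ =>
      ENNReal.ofReal (p.1 ^ (-((1:ℝ)/2)) * p.2 ^ ((1:ℝ)/2)) :=
    ENNReal.measurable_ofReal.comp
      ((measurable_fst.pow measurable_const).mul (measurable_snd.pow measurable_const))
  have mu : Measurable u := by
    rw [hu_def]
    exact (((auxW_meas α r).mul mT).pow measurable_const).mul (mf.comp measurable_fst)
  have mv : Measurable v := by
    rw [hv_def]
    exact (((auxW_meas α r).mul mT').pow measurable_const).mul (mg.comp measurable_snd)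
  have conj : Real.HolderConjugate 2 2 := Real.HolderConjugate.two_two
  have holder := ENNReal.lintegral_mul_le_Lp_mul_Lq π conj mu.aemeasurable mv.aemeasurable
  refine holder.trans ?_
  have hu2 : (∫⁻ a, u a ^ (2:ℝ) ∂π)
      = ENNReal.ofReal ((2:ℝ) ^ (1 + α) * (2/(1/2 - r))) * ∫⁻ x in Ioi (0:ℝ), f x ^ 2 := by
    simp only [hu_def, hπ_def]
    exact aux_key hα hr' f mf
  have hv2 : (∫⁻ a, v a ^ (2:ℝ) ∂π)
      = ENNReal.ofReal ((2:ℝ) ^ (1 + α) * (2/(1/2 - r))) * ∫⁻ x in Ioi (0:ℝ), g x ^ 2 := by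
    have swap : (∫⁻ a, v a ^ (2:ℝ) ∂π) = ∫⁻ p : ℝ × ℝ,
        ((auxW α r p.1 p.2 * ENNReal.ofReal (p.1 ^ ((1:ℝ)/2) * p.2 ^ (-((1:ℝ)/2)))) ^ ((1:ℝ)/2)
          * g p.1) ^ (2:ℝ) ∂π := by
      rw [hπ_def, ← lintegral_prod_swap (fun a => v a ^ (2:ℝ))]
      refine lintegral_congr fun p => ?_
      simp only [hv_def, Prod.fst_swap, Prod.snd_swap]
      rw [auxW_symm α r p.2 p.1, mul_comm (p.2 ^ (-((1:ℝ)/2))) (p.1 ^ ((1:ℝ)/2))]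
    rw [swap, hπ_def]
    exact aux_key hα hr' g mg
  rw [hu2, hv2,
    ENNReal.mul_rpow_of_nonneg _ _ (by norm_num : (0:ℝ) ≤ 1/2),
    ENNReal.mul_rpow_of_nonneg _ _ (by norm_num : (0:ℝ) ≤ 1/2)]
  have ha : (ENNReal.ofReal ((2:ℝ) ^ (1 + α) * (2/(1/2 - r)))) ^ ((1:ℝ)/2)
      * (ENNReal.ofReal ((2:ℝ) ^ (1 + α) * (2/(1/2 - r)))) ^ ((1:ℝ)/2)
      = ENNReal.ofReal ((2:ℝ) ^ (1 + α) * (2/(1/2 - r))) := by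
    rw [← ENNReal.rpow_add _ _ (ofReal_pos.2 hC).ne' ofReal_ne_top]
    norm_num
  refine le_of_eq ?_
  calc (ENNReal.ofReal ((2:ℝ) ^ (1 + α) * (2/(1/2 - r)))) ^ ((1:ℝ)/2)
        * (∫⁻ x in Ioi (0:ℝ), f x ^ 2) ^ ((1:ℝ)/2)
        * ((ENNReal.ofReal ((2:ℝ) ^ (1 + α) * (2/(1/2 - r)))) ^ ((1:ℝ)/2)
          * (∫⁻ y in Ioi (0:ℝ), g y ^ 2) ^ ((1:ℝ)/2))
      = (ENNReal.ofReal ((2:ℝ) ^ (1 + α) * (2/(1/2 - r)))) ^ ((1:ℝ)/2)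
          * (ENNReal.ofReal ((2:ℝ) ^ (1 + α) * (2/(1/2 - r)))) ^ ((1:ℝ)/2)
          * (∫⁻ x in Ioi (0:ℝ), f x ^ 2) ^ ((1:ℝ)/2)
          * (∫⁻ y in Ioi (0:ℝ), g y ^ 2) ^ ((1:ℝ)/2) := by ring
    _ = ENNReal.ofReal ((2:ℝ) ^ (1 + α) * (2/(1/2 - r)))
          * (∫⁻ x in Ioi (0:ℝ), f x ^ 2) ^ ((1:ℝ)/2)
          * (∫⁻ y in Ioi (0:ℝ), g y ^ 2) ^ ((1:ℝ)/2) := by rw [ha]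
end

section
/- Let d ≥ 1, α ∈ (0,2], p ≥ (α−1)/2 with the pair satisfying αs/2 − p < β < 1 + p − αs/2 for some β and s > 0. Suppose an operator on L²(ℝ₊^d) has kernel K(x,y) = x_d^{p − αs/2} |x−y|^{αs/2 − d − p} · 1_{4x_d ≤ |x−y| ≤ 4y_d}. Then K is bounded on L²(ℝ₊^d), provided s < (1+2p)/α. -/
open MeasureTheory Set ENNReal

/-- The last (vertical) coordinate of a point in `ℝ^d`. -/
def lastCoord (d : ℕ) (hd : 1 ≤ d) (x : EuclideanSpace ℝ (Fin d)) : ℝ :=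
  x ⟨d - 1, by omega⟩

lemma abs_coord_sub_le {d : ℕ} (x y : EuclideanSpace ℝ (Fin d)) (i : Fin d) :
    |x i - y i| ≤ dist x y := by
  rw [EuclideanSpace.dist_eq]
  rw [show |x i - y i| = Real.sqrt (dist (x i) (y i) ^ 2) by
    rw [Real.sqrt_sq dist_nonneg, Real.dist_eq]]
  exact Real.sqrt_le_sqrt (Finset.single_le_sum (f := fun j => dist (x j) (y j) ^ 2)
    (fun j _ => sq_nonneg _) (Finset.mem_univ i))

lemma exists_dyadic {t : ℝ} (ht : 1 ≤ t) : ∃ j : ℕ, (2:ℝ)^j ≤ t ∧ t ≤ 2^(j+1) := by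
  have hfl : ⌊t⌋₊ ≠ 0 := by
    have : (1:ℕ) ≤ ⌊t⌋₊ := Nat.le_floor (by exact_mod_cast ht)
    omega
  refine ⟨Nat.log 2 ⌊t⌋₊, ?_, ?_⟩
  · calc ((2:ℝ))^(Nat.log 2 ⌊t⌋₊) = ((2^(Nat.log 2 ⌊t⌋₊) : ℕ) : ℝ) := by push_cast; ring
    _ ≤ (⌊t⌋₊ : ℝ) := by exact_mod_cast Nat.pow_log_le_self 2 hfl
    _ ≤ t := Nat.floor_le (le_trans zero_le_one ht)
  · have h1 : t < ⌊t⌋₊ + 1 := Nat.lt_floor_add_one t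
    have h2 : ⌊t⌋₊ < 2 ^ (Nat.log 2 ⌊t⌋₊ + 1) := Nat.lt_pow_succ_log_self one_lt_two _
    have h3 : (⌊t⌋₊ : ℝ) + 1 ≤ ((2:ℝ)) ^ (Nat.log 2 ⌊t⌋₊ + 1) := by
      exact_mod_cast Nat.succ_le_of_lt h2
    linarith

lemma rpow_interval {t c₁ c₂ r e : ℝ} (ht : 0 < t) (hc₁ : 0 < c₁)
    (h₁ : c₁ * t ≤ r) (h₂ : r ≤ c₂ * t) : r ^ e ≤ max (c₁ ^ e) (c₂ ^ e) * t ^ e := by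
  have hr : 0 < r := lt_of_lt_of_le (mul_pos hc₁ ht) h₁
  have hc₂ : 0 < c₂ := by nlinarith
  have htp : (0:ℝ) ≤ t ^ e := Real.rpow_nonneg ht.le e
  rcases le_or_gt 0 e with he | he
  · calc r ^ e ≤ (c₂ * t) ^ e := Real.rpow_le_rpow hr.le h₂ he
    _ = c₂ ^ e * t ^ e := Real.mul_rpow hc₂.le ht.le
    _ ≤ _ := mul_le_mul_of_nonneg_right (le_max_right _ _) htp
  · calc r ^ e ≤ (c₁ * t) ^ e := Real.rpow_le_rpow_of_nonpos (mul_pos hc₁ ht) h₁ he.le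
    _ = c₁ ^ e * t ^ e := Real.mul_rpow hc₁.le ht.le
    _ ≤ _ := mul_le_mul_of_nonneg_right (le_max_left _ _) htp

lemma volume_box_le (d : ℕ) (hd : 1 ≤ d) (y : EuclideanSpace ℝ (Fin d)) (R u v : ℝ) :
    volume {x : EuclideanSpace ℝ (Fin d) |
        (∀ i, |x i - y i| ≤ R) ∧ x ⟨d-1, by omega⟩ ∈ Set.Icc u v}
      ≤ ENNReal.ofReal (2*R) ^ (d-1) * ENNReal.ofReal (v - u) := by
  set ι : Fin d := ⟨d-1, by omega⟩
  set s : Fin d → Set ℝ := fun i => if i = ι then Icc u v else Icc (y i - R) (y i + R) with hs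
  have hmeas : ∀ i, MeasurableSet (s i) := by
    intro i; simp only [hs]; split <;> exact measurableSet_Icc
  have hsub : {x : EuclideanSpace ℝ (Fin d) |
      (∀ i, |x i - y i| ≤ R) ∧ x ι ∈ Set.Icc u v}
      ⊆ ((MeasurableEquiv.toLp 2 (Fin d → ℝ)).symm) ⁻¹' (Set.univ.pi s) := by
    intro x hx
    intro i _
    have hxi : ((MeasurableEquiv.toLp 2 (Fin d → ℝ)).symm) x i = x i := rfl
    simp only [hs, hxi]
    by_cases h : i = ι
    · rw [if_pos h, h]; exact hx.2
    · simp only [h, if_false]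
      have := abs_le.mp (hx.1 i)
      exact ⟨by linarith [this.1], by linarith [this.2]⟩
  refine le_trans (measure_mono hsub) ?_
  rw [(EuclideanSpace.volume_preserving_symm_measurableEquiv_toLp (Fin d)).measure_preimage
    (MeasurableSet.univ_pi hmeas).nullMeasurableSet]
  rw [volume_pi_pi]
  rw [Finset.prod_eq_prod_diff_singleton_mul (Finset.mem_univ ι)]
  have h1 : ∀ i ∈ Finset.univ \ {ι}, volume (s i) = ENNReal.ofReal (2*R) := by
    intro i hi
    have : i ≠ ι := by simpa using (Finset.mem_sdiff.mp hi).2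
    simp only [hs, this, if_false, Real.volume_Icc]
    ring_nf
  rw [Finset.prod_congr rfl h1, Finset.prod_const]
  have hcard : (Finset.univ \ {ι}).card = d - 1 := by
    rw [Finset.sdiff_singleton_eq_erase, Finset.card_erase_of_mem (Finset.mem_univ _)]
    simp
  rw [hcard]
  simp only [hs, if_pos rfl, Real.volume_Icc]
  exact le_rfl

lemma measurable_lastCoord (d : ℕ) (hd : 1 ≤ d) : Measurable (lastCoord d hd) :=
  (measurable_pi_apply (⟨d - 1, by omega⟩ : Fin d)).comp
    ((MeasurableEquiv.toLp 2 (Fin d → ℝ)).symm).measurable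

lemma tail_bound (d : ℕ) (hd : 1 ≤ d) {a R : ℝ} (ha : 0 < a) (hR : 0 < R)
    (x : EuclideanSpace ℝ (Fin d)) :
    ∫⁻ y in {y : EuclideanSpace ℝ (Fin d) | R ≤ dist x y},
        ENNReal.ofReal (dist x y ^ (-(a + (d:ℝ)))) ≤
      ENNReal.ofReal ((2:ℝ) ^ (d:ℝ)) * (1 - ENNReal.ofReal ((2:ℝ) ^ (-a)))⁻¹
        * volume (Metric.ball (0 : EuclideanSpace ℝ (Fin d)) 1)
        * ENNReal.ofReal (R ^ (-a)) := by
  haveI : Nonempty (Fin d) := ⟨⟨0, by omega⟩⟩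
  haveI : Nontrivial (EuclideanSpace ℝ (Fin d)) := by
    refine ⟨0, EuclideanSpace.single ⟨0, by omega⟩ 1, fun h => ?_⟩
    have := congrArg (fun v => v ⟨0, by omega⟩) h
    simp [EuclideanSpace.single_apply] at this
  set A : ℕ → Set (EuclideanSpace ℝ (Fin d)) :=
    fun j => {y | R * 2^j ≤ dist x y ∧ dist x y ≤ R * 2^(j+1)} with hA
  have hcover : {y : EuclideanSpace ℝ (Fin d) | R ≤ dist x y} ⊆ ⋃ j, A j := by
    intro y hy
    have h1 : (1:ℝ) ≤ dist x y / R := (le_div_iff₀ hR).mpr (by simpa using hy)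
    obtain ⟨j, hj1, hj2⟩ := exists_dyadic h1
    refine mem_iUnion.mpr ⟨j, ?_, ?_⟩
    · rw [mul_comm]; exact (le_div_iff₀ hR).mp hj1
    · rw [mul_comm]; exact (div_le_iff₀ hR).mp hj2
  have key : ∀ j : ℕ, (R * 2^j)^(-(a+(d:ℝ))) * (R * 2^(j+1))^((d:ℝ)) =
      (2:ℝ)^(d:ℝ) * R^(-a) * ((2:ℝ)^(-a))^j := by
    intro j
    have h2j : (0:ℝ) < 2^j := by positivity
    have h2j1 : (0:ℝ) < 2^(j+1) := by positivity
    rw [Real.mul_rpow hR.le h2j.le, Real.mul_rpow hR.le h2j1.le]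
    rw [← Real.rpow_natCast 2 j, ← Real.rpow_natCast 2 (j+1),
      ← Real.rpow_natCast ((2:ℝ)^(-a)) j,
      ← Real.rpow_mul (by norm_num : (0:ℝ) ≤ 2),
      ← Real.rpow_mul (by norm_num : (0:ℝ) ≤ 2),
      ← Real.rpow_mul (by norm_num : (0:ℝ) ≤ 2)]
    push_cast
    calc R ^ (-(a + (d:ℝ))) * 2 ^ ((j:ℝ) * -(a + (d:ℝ))) * (R ^ (d:ℝ) * 2 ^ (((j:ℝ)+1) * (d:ℝ)))
        = R ^ (-(a + (d:ℝ)) + (d:ℝ)) * 2 ^ ((j:ℝ) * -(a + (d:ℝ)) + ((j:ℝ)+1) * (d:ℝ)) := by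
          rw [Real.rpow_add hR, Real.rpow_add two_pos]; push_cast; ring
      _ = R ^ (-a) * 2 ^ ((d:ℝ) + (-a) * (j:ℝ)) := by
          rw [show -(a + (d:ℝ)) + (d:ℝ) = -a by ring,
            show (j:ℝ) * -(a + (d:ℝ)) + ((j:ℝ)+1) * (d:ℝ) = (d:ℝ) + (-a) * (j:ℝ) by ring]
      _ = (2:ℝ)^(d:ℝ) * R^(-a) * 2 ^ ((-a) * (j:ℝ)) := by
          rw [Real.rpow_add two_pos]; ring
  calc ∫⁻ y in {y : EuclideanSpace ℝ (Fin d) | R ≤ dist x y},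
        ENNReal.ofReal (dist x y ^ (-(a + (d:ℝ))))
      ≤ ∫⁻ y in ⋃ j, A j, ENNReal.ofReal (dist x y ^ (-(a + (d:ℝ)))) :=
        lintegral_mono_set hcover
    _ ≤ ∑' j, ∫⁻ y in A j, ENNReal.ofReal (dist x y ^ (-(a + (d:ℝ)))) :=
        lintegral_iUnion_le _ _
    _ ≤ ∑' j, ENNReal.ofReal ((2:ℝ)^(d:ℝ)) * ENNReal.ofReal (R^(-a))
          * volume (Metric.ball (0:EuclideanSpace ℝ (Fin d)) 1)
          * ENNReal.ofReal ((2:ℝ)^(-a))^j := by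
        refine ENNReal.tsum_le_tsum fun j => ?_
        have hRj : (0:ℝ) < R * 2^j := by positivity
        have hRj1 : (0:ℝ) ≤ R * 2^(j+1) := by positivity
        have step1 : ∫⁻ y in A j, ENNReal.ofReal (dist x y ^ (-(a + (d:ℝ)))) ≤
            ENNReal.ofReal ((R * 2^j) ^ (-(a+(d:ℝ)))) * volume (A j) := by
          rw [← setLIntegral_const (A j) (ENNReal.ofReal ((R * 2^j) ^ (-(a+(d:ℝ)))))]
          refine setLIntegral_mono measurable_const fun y hy => ?_
          exact ENNReal.ofReal_le_ofReal
            (Real.rpow_le_rpow_of_nonpos hRj hy.1 (neg_nonpos.mpr (by positivity)))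
        have step2 : volume (A j) ≤
            ENNReal.ofReal ((R * 2^(j+1)) ^ ((d:ℝ)))
              * volume (Metric.ball (0:EuclideanSpace ℝ (Fin d)) 1) := by
          have hsub : A j ⊆ Metric.closedBall x (R * 2^(j+1)) := by
            intro y hy
            rw [Metric.mem_closedBall, dist_comm]
            exact hy.2
          refine le_trans (measure_mono hsub) ?_
          rw [Measure.addHaar_closedBall volume x hRj1, finrank_euclideanSpace_fin,
            ← Real.rpow_natCast (R * 2^(j+1)) d]
        calc ∫⁻ y in A j, ENNReal.ofReal (dist x y ^ (-(a + (d:ℝ))))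
            ≤ ENNReal.ofReal ((R * 2^j) ^ (-(a+(d:ℝ)))) *
              (ENNReal.ofReal ((R * 2^(j+1)) ^ ((d:ℝ)))
                * volume (Metric.ball (0:EuclideanSpace ℝ (Fin d)) 1)) :=
              le_trans step1 (mul_le_mul_right step2 _)
          _ = ENNReal.ofReal ((R * 2^j)^(-(a+(d:ℝ))) * (R * 2^(j+1))^((d:ℝ)))
                * volume (Metric.ball (0:EuclideanSpace ℝ (Fin d)) 1) := by
              rw [ENNReal.ofReal_mul (by positivity), mul_assoc]
          _ = ENNReal.ofReal ((2:ℝ)^(d:ℝ) * R^(-a) * ((2:ℝ)^(-a))^j)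
                * volume (Metric.ball (0:EuclideanSpace ℝ (Fin d)) 1) := by rw [key j]
          _ = ENNReal.ofReal ((2:ℝ)^(d:ℝ)) * ENNReal.ofReal (R^(-a))
                * volume (Metric.ball (0:EuclideanSpace ℝ (Fin d)) 1)
                * ENNReal.ofReal ((2:ℝ)^(-a))^j := by
              rw [ENNReal.ofReal_mul (by positivity), ENNReal.ofReal_mul (by positivity),
                ENNReal.ofReal_pow (by positivity)]
              ring
    _ = ENNReal.ofReal ((2:ℝ)^(d:ℝ)) * ENNReal.ofReal (R^(-a))
          * volume (Metric.ball (0:EuclideanSpace ℝ (Fin d)) 1)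
          * (1 - ENNReal.ofReal ((2:ℝ)^(-a)))⁻¹ := by
        rw [ENNReal.tsum_mul_left, ENNReal.tsum_geometric]
    _ = _ := by ring

lemma estA (d : ℕ) (hd : 1 ≤ d) (e1 : ℝ) (ha : 0 < e1 + 2⁻¹) :
    ∃ C : ℝ≥0∞, C ≠ ∞ ∧ ∀ x : EuclideanSpace ℝ (Fin d), 0 < lastCoord d hd x →
      ∫⁻ y in {y : EuclideanSpace ℝ (Fin d) | 0 < lastCoord d hd y},
        ENNReal.ofReal (if 4 * lastCoord d hd x ≤ dist x y ∧ dist x y ≤ 4 * lastCoord d hd y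
            then lastCoord d hd x ^ e1 * dist x y ^ (-e1 - (d:ℝ)) else 0)
          * ENNReal.ofReal ((lastCoord d hd x / dist x y) ^ ((2:ℝ)⁻¹)) ≤ C := by
  set a : ℝ := e1 + 2⁻¹ with haa
  have hq : ENNReal.ofReal ((2:ℝ)^(-a)) < 1 := by
    rw [← ENNReal.ofReal_one]
    exact (ENNReal.ofReal_lt_ofReal_iff_of_nonneg (by positivity)).mpr
      (Real.rpow_lt_one_of_one_lt_of_neg one_lt_two (by linarith))
  refine ⟨ENNReal.ofReal ((2:ℝ) ^ (d:ℝ)) * (1 - ENNReal.ofReal ((2:ℝ) ^ (-a)))⁻¹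
      * volume (Metric.ball (0 : EuclideanSpace ℝ (Fin d)) 1)
      * ENNReal.ofReal ((4:ℝ) ^ (-a)), ?_, ?_⟩
  · refine ENNReal.mul_ne_top (ENNReal.mul_ne_top (ENNReal.mul_ne_top ENNReal.ofReal_ne_top
      (ENNReal.inv_ne_top.mpr ?_)) measure_ball_lt_top.ne) ENNReal.ofReal_ne_top
    exact (tsub_pos_iff_lt.mpr hq).ne'
  intro x hx
  have hbd : ∀ y : EuclideanSpace ℝ (Fin d),
      ENNReal.ofReal (if 4 * lastCoord d hd x ≤ dist x y ∧ dist x y ≤ 4 * lastCoord d hd y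
          then lastCoord d hd x ^ e1 * dist x y ^ (-e1 - (d:ℝ)) else 0)
        * ENNReal.ofReal ((lastCoord d hd x / dist x y) ^ ((2:ℝ)⁻¹))
      ≤ Set.indicator {y | 4 * lastCoord d hd x ≤ dist x y}
          (fun y => ENNReal.ofReal (lastCoord d hd x ^ a * dist x y ^ (-(a + (d:ℝ))))) y := by
    intro y
    by_cases hc : 4 * lastCoord d hd x ≤ dist x y ∧ dist x y ≤ 4 * lastCoord d hd y
    · rw [if_pos hc, Set.indicator_of_mem (show y ∈ {y | 4 * lastCoord d hd x ≤ dist x y}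
        from hc.1)]
      have hdist : 0 < dist x y := lt_of_lt_of_le (by positivity) hc.1
      rw [← ENNReal.ofReal_mul (by positivity)]
      apply ENNReal.ofReal_le_ofReal
      rw [Real.div_rpow hx.le hdist.le, div_eq_mul_inv, ← Real.rpow_neg hdist.le]
      apply le_of_eq
      rw [haa, show -(e1 + 2⁻¹ + (d:ℝ)) = (-e1 - (d:ℝ)) + (-(2⁻¹:ℝ)) by push_cast; ring,
        Real.rpow_add hdist, Real.rpow_add hx]
      ring
    · rw [if_neg hc]
      simp only [ENNReal.ofReal_zero, zero_mul]
      exact zero_le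
  calc ∫⁻ y in {y : EuclideanSpace ℝ (Fin d) | 0 < lastCoord d hd y},
        ENNReal.ofReal (if 4 * lastCoord d hd x ≤ dist x y ∧ dist x y ≤ 4 * lastCoord d hd y
            then lastCoord d hd x ^ e1 * dist x y ^ (-e1 - (d:ℝ)) else 0)
          * ENNReal.ofReal ((lastCoord d hd x / dist x y) ^ ((2:ℝ)⁻¹))
      ≤ ∫⁻ y in {y : EuclideanSpace ℝ (Fin d) | 0 < lastCoord d hd y},
          Set.indicator {y | 4 * lastCoord d hd x ≤ dist x y}
            (fun y => ENNReal.ofReal (lastCoord d hd x ^ a * dist x y ^ (-(a + (d:ℝ))))) y :=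
        lintegral_mono fun y => hbd y
    _ ≤ ∫⁻ y, Set.indicator {y | 4 * lastCoord d hd x ≤ dist x y}
            (fun y => ENNReal.ofReal (lastCoord d hd x ^ a * dist x y ^ (-(a + (d:ℝ))))) y :=
        setLIntegral_le_lintegral _ _
    _ = ∫⁻ y in {y | 4 * lastCoord d hd x ≤ dist x y},
          ENNReal.ofReal (lastCoord d hd x ^ a * dist x y ^ (-(a + (d:ℝ)))) := by
        rw [← lintegral_indicator]
        exact measurableSet_le measurable_const (measurable_const.dist measurable_id)
    _ = ENNReal.ofReal (lastCoord d hd x ^ a) * ∫⁻ y in {y | 4 * lastCoord d hd x ≤ dist x y},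
          ENNReal.ofReal (dist x y ^ (-(a + (d:ℝ)))) := by
        simp_rw [ENNReal.ofReal_mul (by positivity : (0:ℝ) ≤ lastCoord d hd x ^ a)]
        exact lintegral_const_mul' _ _ ENNReal.ofReal_ne_top
    _ ≤ ENNReal.ofReal (lastCoord d hd x ^ a) *
        (ENNReal.ofReal ((2:ℝ) ^ (d:ℝ)) * (1 - ENNReal.ofReal ((2:ℝ) ^ (-a)))⁻¹
          * volume (Metric.ball (0 : EuclideanSpace ℝ (Fin d)) 1)
          * ENNReal.ofReal ((4 * lastCoord d hd x) ^ (-a))) :=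
        mul_le_mul_right (tail_bound d hd (by linarith) (by positivity) x) _
    _ = _ := by
        rw [show ENNReal.ofReal (lastCoord d hd x ^ a) *
            (ENNReal.ofReal ((2:ℝ) ^ (d:ℝ)) * (1 - ENNReal.ofReal ((2:ℝ) ^ (-a)))⁻¹
              * volume (Metric.ball (0 : EuclideanSpace ℝ (Fin d)) 1)
              * ENNReal.ofReal ((4 * lastCoord d hd x) ^ (-a)))
            = ENNReal.ofReal ((2:ℝ) ^ (d:ℝ)) * (1 - ENNReal.ofReal ((2:ℝ) ^ (-a)))⁻¹
              * volume (Metric.ball (0 : EuclideanSpace ℝ (Fin d)) 1)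
              * (ENNReal.ofReal (lastCoord d hd x ^ a)
                * ENNReal.ofReal ((4 * lastCoord d hd x) ^ (-a))) by ring]
        congr 1
        rw [← ENNReal.ofReal_mul (by positivity),
          Real.mul_rpow (by norm_num) hx.le, ← mul_assoc, mul_comm _ ((4:ℝ)^(-a)), mul_assoc,
          ← Real.rpow_add hx]
        norm_num

lemma layer_const (d : ℕ) (hd : 1 ≤ d) (b M M₂ : ℝ) {t : ℝ} (ht : 0 < t) (k : ℕ) :
    (M * t^(b-(d:ℝ))) * (M₂ * t^(-b) * (2:ℝ)^((k:ℝ)*b))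
      * ((2*(4*t))^(d-1) * (t/2^k - t/2^(k+1)))
    = (M * M₂ * 8^(d-1) * 2⁻¹) * ((2:ℝ)^(b-1))^k := by
  have h2k : ((2:ℝ)^k) ≠ 0 := by positivity
  have hsub : t/2^k - t/2^(k+1) = t * 2⁻¹ * ((2:ℝ)^k)⁻¹ := by
    rw [pow_succ]; field_simp; ring
  have h8 : (2*(4*t))^(d-1) = 8^(d-1) * t^(d-1) := by
    rw [show 2*(4*t) = 8*t by ring, mul_pow]
  have hT : t^(b-(d:ℝ)) * t^(-b) * t^(d-1) * t = 1 := by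
    rw [← Real.rpow_natCast t (d-1), Nat.cast_sub hd, Nat.cast_one,
      ← Real.rpow_add ht, ← Real.rpow_add ht,
      show b - (d:ℝ) + -b + ((d:ℝ) - 1) = -1 by ring, Real.rpow_neg_one]
    exact inv_mul_cancel₀ ht.ne'
  have h2 : (2:ℝ)^((k:ℝ)*b) * ((2:ℝ)^k)⁻¹ = ((2:ℝ)^(b-1))^k := by
    rw [← Real.rpow_natCast ((2:ℝ)^(b-1)) k, ← Real.rpow_natCast (2:ℝ) k,
      ← Real.rpow_neg (by norm_num : (0:ℝ) ≤ 2),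
      ← Real.rpow_mul (by norm_num : (0:ℝ) ≤ 2),
      ← Real.rpow_add two_pos]
    congr 1
    ring
  calc (M * t^(b-(d:ℝ))) * (M₂ * t^(-b) * (2:ℝ)^((k:ℝ)*b))
      * ((2*(4*t))^(d-1) * (t/2^k - t/2^(k+1)))
      = (M * M₂ * 8^(d-1) * 2⁻¹) * (t^(b-(d:ℝ)) * t^(-b) * t^(d-1) * t)
        * ((2:ℝ)^((k:ℝ)*b) * ((2:ℝ)^k)⁻¹) := by rw [hsub, h8]; ring
    _ = _ := by rw [hT, h2]; ring

lemma estB (d : ℕ) (hd : 1 ≤ d) (e1 : ℝ) (ha : 0 < e1 + 2⁻¹) :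
    ∃ C : ℝ≥0∞, C ≠ ∞ ∧ ∀ y : EuclideanSpace ℝ (Fin d), 0 < lastCoord d hd y →
      ∫⁻ x in {x : EuclideanSpace ℝ (Fin d) | 0 < lastCoord d hd x},
        ENNReal.ofReal (if 4 * lastCoord d hd x ≤ dist x y ∧ dist x y ≤ 4 * lastCoord d hd y
            then lastCoord d hd x ^ e1 * dist x y ^ (-e1 - (d:ℝ)) else 0)
          * (ENNReal.ofReal ((lastCoord d hd x / dist x y) ^ ((2:ℝ)⁻¹)))⁻¹ ≤ C := by
  set b : ℝ := 2⁻¹ - e1 with hbb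
  have hb1 : b < 1 := by rw [hbb]; linarith
  set M : ℝ := max ((4/5:ℝ)^(b-(d:ℝ))) ((4:ℝ)^(b-(d:ℝ))) with hM
  set M₂ : ℝ := max ((2:ℝ)^b) 1 with hM₂
  have hMpos : 0 < M := lt_max_of_lt_left (Real.rpow_pos_of_pos (by norm_num) _)
  have hM₂pos : 0 < M₂ := lt_max_of_lt_right one_pos
  have hq : ENNReal.ofReal ((2:ℝ)^(b-1)) < 1 := by
    rw [← ENNReal.ofReal_one]
    exact (ENNReal.ofReal_lt_ofReal_iff_of_nonneg (by positivity)).mpr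
      (Real.rpow_lt_one_of_one_lt_of_neg one_lt_two (by linarith))
  refine ⟨ENNReal.ofReal (M * M₂ * 8^(d-1) * 2⁻¹)
      * (1 - ENNReal.ofReal ((2:ℝ)^(b-1)))⁻¹, ?_, ?_⟩
  · exact ENNReal.mul_ne_top ENNReal.ofReal_ne_top
      (ENNReal.inv_ne_top.mpr (tsub_pos_iff_lt.mpr hq).ne')
  intro y hy
  set ℓ : EuclideanSpace ℝ (Fin d) → ℝ := lastCoord d hd with hℓ
  have hℓmeas : Measurable ℓ := measurable_lastCoord d hd
  have hdistmeas : Measurable (fun x : EuclideanSpace ℝ (Fin d) => dist x y) :=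
    (continuous_id.dist continuous_const).measurable
  set Reg : Set (EuclideanSpace ℝ (Fin d)) :=
    {x | (4 * ℓ x ≤ dist x y ∧ dist x y ≤ 4 * ℓ y) ∧ 0 < ℓ x} with hReg
  have hRegMeas : MeasurableSet Reg := by
    refine MeasurableSet.inter (MeasurableSet.inter ?_ ?_) ?_
    · exact measurableSet_le (hℓmeas.const_mul 4) hdistmeas
    · exact measurableSet_le hdistmeas measurable_const
    · exact measurableSet_lt measurable_const hℓmeas
  set ψ : EuclideanSpace ℝ (Fin d) → ℝ≥0∞ :=
    fun x => ENNReal.ofReal ((M * ℓ y ^ (b-(d:ℝ))) * ℓ x ^ (-b)) with hψ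
  have hψmeas : Measurable ψ :=
    ((hℓmeas.pow measurable_const).const_mul _).ennreal_ofReal
  -- Step 1: pointwise bound
  have step1 : ∀ x ∈ {x : EuclideanSpace ℝ (Fin d) | 0 < ℓ x},
      ENNReal.ofReal (if 4 * ℓ x ≤ dist x y ∧ dist x y ≤ 4 * ℓ y
          then ℓ x ^ e1 * dist x y ^ (-e1 - (d:ℝ)) else 0)
        * (ENNReal.ofReal ((ℓ x / dist x y) ^ ((2:ℝ)⁻¹)))⁻¹
      ≤ Set.indicator Reg ψ x := by
    intro x hx
    by_cases hc : 4 * ℓ x ≤ dist x y ∧ dist x y ≤ 4 * ℓ y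
    · have hx' : 0 < ℓ x := hx
      have hdist : 0 < dist x y := lt_of_lt_of_le (by positivity) hc.1
      have hdiv : 0 < (ℓ x / dist x y) ^ ((2:ℝ)⁻¹) :=
        Real.rpow_pos_of_pos (div_pos hx' hdist) _
      rw [if_pos hc, Set.indicator_of_mem (show x ∈ Reg from ⟨hc, hx'⟩), hψ,
        ← ENNReal.ofReal_inv_of_pos hdiv, ← ENNReal.ofReal_mul (by positivity)]
      apply ENNReal.ofReal_le_ofReal
      have habs : |ℓ x - ℓ y| ≤ dist x y := abs_coord_sub_le x y _
      have hr1 : (4/5 : ℝ) * ℓ y ≤ dist x y := by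
        have h1 := (abs_le.mp habs).1
        linarith [hc.1]
      have hdb : dist x y ^ (b - (d:ℝ)) ≤ M * ℓ y ^ (b - (d:ℝ)) :=
        rpow_interval hy (by norm_num) hr1 hc.2
      have hLHS : ℓ x ^ e1 * dist x y ^ (-e1 - (d:ℝ)) * ((ℓ x / dist x y) ^ ((2:ℝ)⁻¹))⁻¹
          = ℓ x ^ (-b) * dist x y ^ (b - (d:ℝ)) := by
        rw [← Real.rpow_neg (div_pos hx' hdist).le,
          Real.div_rpow hx'.le hdist.le, div_eq_mul_inv,
          ← Real.rpow_neg hdist.le]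
        have h1 : ℓ x ^ e1 * ℓ x ^ (-(2⁻¹:ℝ)) = ℓ x ^ (-b) := by
          rw [← Real.rpow_add hx']; congr 1; rw [hbb]; ring
        have h2 : dist x y ^ (-e1 - (d:ℝ)) * dist x y ^ (- -(2⁻¹:ℝ)) = dist x y ^ (b - (d:ℝ)) := by
          rw [← Real.rpow_add hdist]; congr 1; rw [hbb]; ring
        calc ℓ x ^ e1 * dist x y ^ (-e1 - (d:ℝ)) * (ℓ x ^ (-(2⁻¹:ℝ)) * dist x y ^ (- -(2⁻¹:ℝ)))
            = (ℓ x ^ e1 * ℓ x ^ (-(2⁻¹:ℝ))) * (dist x y ^ (-e1 - (d:ℝ)) * dist x y ^ (- -(2⁻¹:ℝ))) := by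
              ring
          _ = ℓ x ^ (-b) * dist x y ^ (b - (d:ℝ)) := by rw [h1, h2]
      rw [hLHS]
      calc ℓ x ^ (-b) * dist x y ^ (b - (d:ℝ))
          ≤ ℓ x ^ (-b) * (M * ℓ y ^ (b - (d:ℝ))) :=
            mul_le_mul_of_nonneg_left hdb (Real.rpow_nonneg hx'.le _)
        _ = M * ℓ y ^ (b - (d:ℝ)) * ℓ x ^ (-b) := by ring
    · rw [if_neg hc, ENNReal.ofReal_zero, zero_mul]
      exact zero_le
  set L : ℕ → Set (EuclideanSpace ℝ (Fin d)) := fun k =>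
    {x | (∀ i, |x i - y i| ≤ 4 * ℓ y) ∧ ℓ x ∈ Set.Icc (ℓ y/2^(k+1)) (ℓ y/2^k)} with hL
  have hcover : Reg ⊆ ⋃ k, L k := by
    rintro x ⟨⟨h1, h2⟩, hx'⟩
    have hxy : ℓ x ≤ ℓ y := by linarith
    have ht : 1 ≤ ℓ y / ℓ x := (one_le_div hx').mpr hxy
    obtain ⟨k, hk1, hk2⟩ := exists_dyadic ht
    refine mem_iUnion.mpr ⟨k, fun i => le_trans (abs_coord_sub_le x y i) h2, ?_, ?_⟩
    · refine (div_le_iff₀ (by positivity)).mpr ?_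
      rw [mul_comm]
      exact (div_le_iff₀ hx').mp hk2
    · refine (le_div_iff₀ (by positivity)).mpr ?_
      rw [mul_comm]
      exact (le_div_iff₀ hx').mp hk1
  have per_k : ∀ k : ℕ, ∫⁻ x in L k, ψ x ≤
      ENNReal.ofReal ((M * ℓ y ^ (b-(d:ℝ))) * (M₂ * ℓ y ^ (-b) * (2:ℝ)^((k:ℝ)*b)))
        * (ENNReal.ofReal (2*(4*ℓ y)) ^ (d-1) * ENNReal.ofReal (ℓ y/2^k - ℓ y/2^(k+1))) := by
    intro k
    have e1k : ∀ m : ℕ, (((2:ℝ)^m)⁻¹ : ℝ) ^ (-b) = (2:ℝ)^((m:ℝ)*b) := by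
      intro m
      rw [← Real.rpow_natCast 2 m, ← Real.rpow_neg (by norm_num : (0:ℝ) ≤ 2),
        ← Real.rpow_mul (by norm_num : (0:ℝ) ≤ 2)]
      congr 1
      ring
    have hvol : volume (L k) ≤
        ENNReal.ofReal (2*(4*ℓ y)) ^ (d-1) * ENNReal.ofReal (ℓ y/2^k - ℓ y/2^(k+1)) := by
      refine le_trans (measure_mono (fun x hx => hx)) (volume_box_le d hd y (4*ℓ y) _ _)
    have hpt : ∀ x ∈ L k, ψ x ≤
        ENNReal.ofReal ((M * ℓ y ^ (b-(d:ℝ))) * (M₂ * ℓ y ^ (-b) * (2:ℝ)^((k:ℝ)*b))) := by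
      intro x hx
      have hlo := hx.2.1
      have hhi := hx.2.2
      have hbound : ℓ x ^ (-b) ≤ M₂ * ℓ y ^ (-b) * (2:ℝ)^((k:ℝ)*b) := by
        have hint := rpow_interval (t := ℓ y) (c₁ := ((2:ℝ)^(k+1))⁻¹) (c₂ := ((2:ℝ)^k)⁻¹)
          (r := ℓ x) (e := -b) hy (by positivity)
          (by rw [inv_mul_eq_div]; exact hlo) (by rw [inv_mul_eq_div]; exact hhi)
        have hmax : max ((((2:ℝ)^(k+1))⁻¹) ^ (-b)) ((((2:ℝ)^k)⁻¹) ^ (-b))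
            ≤ (2:ℝ)^((k:ℝ)*b) * M₂ := by
          rw [e1k (k+1), e1k k]
          refine max_le ?_ ?_
          · rw [show ((k+1:ℕ):ℝ) * b = (k:ℝ)*b + b by push_cast; ring,
              Real.rpow_add two_pos]
            exact mul_le_mul_of_nonneg_left (le_max_left _ _) (by positivity)
          · nth_rewrite 1 [← mul_one ((2:ℝ)^((k:ℝ)*b))]
            exact mul_le_mul_of_nonneg_left (le_max_right _ _) (by positivity)
        calc ℓ x ^ (-b) ≤ max ((((2:ℝ)^(k+1))⁻¹) ^ (-b)) ((((2:ℝ)^k)⁻¹) ^ (-b)) * ℓ y ^ (-b) :=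
              hint
          _ ≤ (2:ℝ)^((k:ℝ)*b) * M₂ * ℓ y ^ (-b) :=
              mul_le_mul_of_nonneg_right hmax (Real.rpow_nonneg hy.le _)
          _ = M₂ * ℓ y ^ (-b) * (2:ℝ)^((k:ℝ)*b) := by ring
      exact ENNReal.ofReal_le_ofReal (mul_le_mul_of_nonneg_left hbound
        (mul_nonneg hMpos.le (Real.rpow_nonneg hy.le _)))
    calc ∫⁻ x in L k, ψ x
        ≤ ∫⁻ _ in L k, ENNReal.ofReal ((M * ℓ y ^ (b-(d:ℝ)))
            * (M₂ * ℓ y ^ (-b) * (2:ℝ)^((k:ℝ)*b))) := setLIntegral_mono measurable_const hpt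
      _ = ENNReal.ofReal ((M * ℓ y ^ (b-(d:ℝ))) * (M₂ * ℓ y ^ (-b) * (2:ℝ)^((k:ℝ)*b)))
            * volume (L k) := setLIntegral_const _ _
      _ ≤ _ := mul_le_mul_right hvol _
  have hsub_nonneg : ∀ k : ℕ, (0:ℝ) ≤ ℓ y/2^k - ℓ y/2^(k+1) := by
    intro k
    rw [div_sub_div _ _ (by positivity) (by positivity : ((2:ℝ)^(k+1)) ≠ 0)]
    have : (0:ℝ) < (2:ℝ)^k * 2^(k+1) := by positivity
    apply div_nonneg _ this.le
    rw [pow_succ]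
    nlinarith [hy, pow_pos (by norm_num : (0:ℝ) < 2) k]
  have hA_nonneg : ∀ k : ℕ, (0:ℝ) ≤ (M * ℓ y ^ (b-(d:ℝ))) * (M₂ * ℓ y ^ (-b) * (2:ℝ)^((k:ℝ)*b)) :=
    fun k => mul_nonneg (mul_nonneg hMpos.le (Real.rpow_nonneg hy.le _))
      (mul_nonneg (mul_nonneg hM₂pos.le (Real.rpow_nonneg hy.le _)) (Real.rpow_nonneg (by norm_num) _))
  calc ∫⁻ x in {x : EuclideanSpace ℝ (Fin d) | 0 < ℓ x},
        ENNReal.ofReal (if 4 * ℓ x ≤ dist x y ∧ dist x y ≤ 4 * ℓ y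
            then ℓ x ^ e1 * dist x y ^ (-e1 - (d:ℝ)) else 0)
          * (ENNReal.ofReal ((ℓ x / dist x y) ^ ((2:ℝ)⁻¹)))⁻¹
      ≤ ∫⁻ x in {x : EuclideanSpace ℝ (Fin d) | 0 < ℓ x}, Set.indicator Reg ψ x :=
        setLIntegral_mono (hψmeas.indicator hRegMeas) step1
    _ ≤ ∫⁻ x, Set.indicator Reg ψ x := setLIntegral_le_lintegral _ _
    _ = ∫⁻ x in Reg, ψ x := lintegral_indicator hRegMeas ψ
    _ ≤ ∫⁻ x in ⋃ k, L k, ψ x := lintegral_mono_set hcover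
    _ ≤ ∑' k, ∫⁻ x in L k, ψ x := lintegral_iUnion_le _ _
    _ ≤ ∑' k : ℕ, ENNReal.ofReal ((M * ℓ y ^ (b-(d:ℝ))) * (M₂ * ℓ y ^ (-b) * (2:ℝ)^((k:ℝ)*b)))
          * (ENNReal.ofReal (2*(4*ℓ y)) ^ (d-1) * ENNReal.ofReal (ℓ y/2^k - ℓ y/2^(k+1))) :=
        ENNReal.tsum_le_tsum per_k
    _ = ∑' k : ℕ, ENNReal.ofReal (M * M₂ * 8^(d-1) * 2⁻¹) * ENNReal.ofReal ((2:ℝ)^(b-1))^k := by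
        congr 1
        funext k
        rw [← ENNReal.ofReal_pow (by positivity : (0:ℝ) ≤ 2*(4*ℓ y)),
          ← ENNReal.ofReal_mul (by positivity),
          ← ENNReal.ofReal_mul (hA_nonneg k),
          layer_const d hd b M M₂ hy k,
          ENNReal.ofReal_mul (by positivity),
          ENNReal.ofReal_pow (by positivity)]
    _ = ENNReal.ofReal (M * M₂ * 8^(d-1) * 2⁻¹) * (1 - ENNReal.ofReal ((2:ℝ)^(b-1)))⁻¹ := by
        rw [ENNReal.tsum_mul_left, ENNReal.tsum_geometric]

/-- The integral operator with kernel
`K(x,y) = x_d^{p-αs/2} |x-y|^{αs/2-d-p} 1_{4x_d ≤ |x-y| ≤ 4y_d}` is bounded on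
`L²(ℝ₊^d)`, provided `s < (1+2p)/α`. -/
theorem stmt_11 (d : ℕ) (hd : 1 ≤ d) (α p s : ℝ) (hα1 : 0 < α) (hα2 : α ≤ 2)
    (hp : (α - 1) / 2 ≤ p) (hs1 : 0 < s) (hs2 : s < (1 + 2 * p) / α) :
    ∃ C' : ℝ, 0 < C' ∧ ∀ f g : EuclideanSpace ℝ (Fin d) → ℝ≥0∞,
      Measurable f → Measurable g →
      (∫⁻ x in {x | 0 < lastCoord d hd x}, ∫⁻ y in {y | 0 < lastCoord d hd y},
          ENNReal.ofReal
            (if 4 * lastCoord d hd x ≤ dist x y ∧ dist x y ≤ 4 * lastCoord d hd y then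
              (lastCoord d hd x) ^ (p - α * s / 2) * dist x y ^ (α * s / 2 - d - p)
            else 0) * f x * g y)
        ≤ ENNReal.ofReal C'
            * (∫⁻ x in {x | 0 < lastCoord d hd x}, f x ^ 2) ^ ((1:ℝ)/2)
            * (∫⁻ y in {y | 0 < lastCoord d hd y}, g y ^ 2) ^ ((1:ℝ)/2) := by
  classical
  set E := EuclideanSpace ℝ (Fin d) with hE
  set ℓ : EuclideanSpace ℝ (Fin d) → ℝ := lastCoord d hd with hℓdef
  have hℓmeas : Measurable ℓ := measurable_lastCoord d hd
  set e1 : ℝ := p - α * s / 2 with he1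
  have ha : 0 < e1 + 2⁻¹ := by
    have hsα : s * α < 1 + 2 * p := (lt_div_iff₀ hα1).mp hs2
    have hcomm : s * α = α * s := mul_comm s α
    rw [he1]
    linarith
  obtain ⟨C1, hC1t, hC1⟩ := estA d hd e1 ha
  obtain ⟨C2, hC2t, hC2⟩ := estB d hd e1 ha
  have hX : C1 ^ ((1:ℝ)/2) * C2 ^ ((1:ℝ)/2) ≠ ∞ :=
    ENNReal.mul_ne_top (ENNReal.rpow_ne_top_of_nonneg (by norm_num) hC1t)
      (ENNReal.rpow_ne_top_of_nonneg (by norm_num) hC2t)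
  refine ⟨(C1 ^ ((1:ℝ)/2) * C2 ^ ((1:ℝ)/2)).toReal + 1, by positivity, ?_⟩
  intro f g hf hg
  have hCle : C1 ^ ((1:ℝ)/2) * C2 ^ ((1:ℝ)/2)
      ≤ ENNReal.ofReal ((C1 ^ ((1:ℝ)/2) * C2 ^ ((1:ℝ)/2)).toReal + 1) := by
    conv_lhs => rw [← ENNReal.ofReal_toReal hX]
    exact ENNReal.ofReal_le_ofReal (by linarith)
  -- abbreviations
  set S : Set (EuclideanSpace ℝ (Fin d)) := {x | 0 < ℓ x} with hS
  have hSmeas : MeasurableSet S := measurableSet_lt measurable_const hℓmeas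
  set k : EuclideanSpace ℝ (Fin d) → EuclideanSpace ℝ (Fin d) → ℝ≥0∞ := fun x y =>
    ENNReal.ofReal (if 4 * ℓ x ≤ dist x y ∧ dist x y ≤ 4 * ℓ y
      then ℓ x ^ e1 * dist x y ^ (-e1 - (d:ℝ)) else 0) with hk
  set w : EuclideanSpace ℝ (Fin d) → EuclideanSpace ℝ (Fin d) → ℝ≥0∞ := fun x y =>
    ENNReal.ofReal ((ℓ x / dist x y) ^ ((2:ℝ)⁻¹)) with hw
  have hgoal_exp : α * s / 2 - (d:ℝ) - p = -e1 - (d:ℝ) := by rw [he1]; ring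
  -- measurability on the product space
  have hkm : Measurable (fun z : EuclideanSpace ℝ (Fin d) × EuclideanSpace ℝ (Fin d) =>
      k z.1 z.2) := by
    apply Measurable.ennreal_ofReal
    refine Measurable.ite ?_ ?_ measurable_const
    · refine MeasurableSet.inter ?_ ?_
      · exact measurableSet_le ((hℓmeas.comp measurable_fst).const_mul 4) measurable_dist
      · exact measurableSet_le measurable_dist ((hℓmeas.comp measurable_snd).const_mul 4)
    · exact ((hℓmeas.comp measurable_fst).pow measurable_const).mul
        (measurable_dist.pow measurable_const)
  have hwm : Measurable (fun z : EuclideanSpace ℝ (Fin d) × EuclideanSpace ℝ (Fin d) =>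
      w z.1 z.2) :=
    (((hℓmeas.comp measurable_fst).div measurable_dist).pow measurable_const).ennreal_ofReal
  set μ : Measure (EuclideanSpace ℝ (Fin d)) := volume.restrict S with hμ
  set ρ : Measure (EuclideanSpace ℝ (Fin d) × EuclideanSpace ℝ (Fin d)) := μ.prod μ with hρ
  set F : EuclideanSpace ℝ (Fin d) × EuclideanSpace ℝ (Fin d) → ℝ≥0∞ := fun z =>
    (k z.1 z.2 * w z.1 z.2) ^ ((2:ℝ)⁻¹) * f z.1 with hF
  set G : EuclideanSpace ℝ (Fin d) × EuclideanSpace ℝ (Fin d) → ℝ≥0∞ := fun z =>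
    (k z.1 z.2 * (w z.1 z.2)⁻¹) ^ ((2:ℝ)⁻¹) * g z.2 with hG
  have hFm : Measurable F := ((hkm.mul hwm).pow measurable_const).mul (hf.comp measurable_fst)
  have hGm : Measurable G := ((hkm.mul hwm.inv).pow measurable_const).mul (hg.comp measurable_snd)
  -- pointwise factorization on S ×ˢ S
  have hfact : ∀ z ∈ S ×ˢ S,
      k z.1 z.2 * f z.1 * g z.2 ≤ F z * G z := by
    rintro ⟨x, y⟩ ⟨hx, hy⟩
    have hxS : 0 < ℓ x := hx
    have hyS : 0 < ℓ y := hy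
    have hkle : k x y ≤ (k x y * w x y) ^ ((2:ℝ)⁻¹) * (k x y * (w x y)⁻¹) ^ ((2:ℝ)⁻¹) := by
      by_cases hc : 4 * ℓ x ≤ dist x y ∧ dist x y ≤ 4 * ℓ y
      · have hdist : 0 < dist x y := lt_of_lt_of_le (by positivity) hc.1
        have ht : 0 < (ℓ x / dist x y) ^ ((2:ℝ)⁻¹) :=
          Real.rpow_pos_of_pos (div_pos hxS hdist) _
        have hκ : 0 ≤ ℓ x ^ e1 * dist x y ^ (-e1 - (d:ℝ)) := by positivity
        apply le_of_eq
        rw [hk, hw]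
        simp only [if_pos hc]
        rw [← ENNReal.ofReal_inv_of_pos ht, ← ENNReal.ofReal_mul hκ,
          ← ENNReal.ofReal_mul hκ,
          ENNReal.ofReal_rpow_of_nonneg (by positivity) (by norm_num),
          ENNReal.ofReal_rpow_of_nonneg (by positivity) (by norm_num),
          ← ENNReal.ofReal_mul (by positivity)]
        congr 1
        rw [← Real.mul_rpow (by positivity) (by positivity)]
        rw [show ℓ x ^ e1 * dist x y ^ (-e1 - (d:ℝ)) * (ℓ x / dist x y) ^ ((2:ℝ)⁻¹)
            * (ℓ x ^ e1 * dist x y ^ (-e1 - (d:ℝ)) * ((ℓ x / dist x y) ^ ((2:ℝ)⁻¹))⁻¹)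
            = (ℓ x ^ e1 * dist x y ^ (-e1 - (d:ℝ))) ^ (2:ℕ) by
          field_simp]
        rw [← Real.rpow_natCast (ℓ x ^ e1 * dist x y ^ (-e1 - (d:ℝ))) 2,
          ← Real.rpow_mul hκ]
        norm_num
      · rw [hk]
        simp only [if_neg hc, ENNReal.ofReal_zero]
        exact zero_le
    calc k x y * f x * g y ≤ ((k x y * w x y) ^ ((2:ℝ)⁻¹) * (k x y * (w x y)⁻¹) ^ ((2:ℝ)⁻¹))
          * f x * g y := by
          exact mul_le_mul_left (mul_le_mul_left hkle _) _
      _ = F (x, y) * G (x, y) := by rw [hF, hG]; ring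
  -- to product measure
  have hae : ∀ᵐ z ∂ρ, z ∈ S ×ˢ S := by
    rw [hρ, hμ, Measure.prod_restrict]
    exact ae_restrict_mem (hSmeas.prod hSmeas)
  have hiter : (∫⁻ x in S, ∫⁻ y in S, k x y * f x * g y)
      = ∫⁻ z, k z.1 z.2 * f z.1 * g z.2 ∂ρ := by
    rw [hρ, hμ]
    exact lintegral_lintegral (((hkm.mul (hf.comp measurable_fst)).mul
      (hg.comp measurable_snd)).aemeasurable)
  have hstep : (∫⁻ z, k z.1 z.2 * f z.1 * g z.2 ∂ρ) ≤ ∫⁻ z, F z * G z ∂ρ := by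
    refine lintegral_mono_ae ?_
    filter_upwards [hae] with z hz
    exact hfact z hz
  have hconj : Real.HolderConjugate 2 2 := Real.HolderConjugate.two_two
  have hholder : (∫⁻ z, F z * G z ∂ρ)
      ≤ (∫⁻ z, F z ^ (2:ℝ) ∂ρ) ^ ((1:ℝ)/2) * (∫⁻ z, G z ^ (2:ℝ) ∂ρ) ^ ((1:ℝ)/2) := by
    have := ENNReal.lintegral_mul_le_Lp_mul_Lq ρ hconj hFm.aemeasurable hGm.aemeasurable
    simpa using this
  -- compute the F integral
  have hF2 : ∀ z : EuclideanSpace ℝ (Fin d) × EuclideanSpace ℝ (Fin d),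
      F z ^ (2:ℝ) = (k z.1 z.2 * w z.1 z.2) * f z.1 ^ (2:ℝ) := by
    intro z
    rw [hF]
    rw [ENNReal.mul_rpow_of_nonneg _ _ (by norm_num : (0:ℝ) ≤ 2),
      ← ENNReal.rpow_mul]
    norm_num
  have hG2 : ∀ z : EuclideanSpace ℝ (Fin d) × EuclideanSpace ℝ (Fin d),
      G z ^ (2:ℝ) = (k z.1 z.2 * (w z.1 z.2)⁻¹) * g z.2 ^ (2:ℝ) := by
    intro z
    rw [hG]
    rw [ENNReal.mul_rpow_of_nonneg _ _ (by norm_num : (0:ℝ) ≤ 2),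
      ← ENNReal.rpow_mul]
    norm_num
  have hFint : (∫⁻ z, F z ^ (2:ℝ) ∂ρ) ≤ C1 * ∫⁻ x in S, f x ^ (2:ℝ) := by
    calc (∫⁻ z, F z ^ (2:ℝ) ∂ρ)
        = ∫⁻ z, (k z.1 z.2 * w z.1 z.2) * f z.1 ^ (2:ℝ) ∂ρ := by
          simp_rw [hF2]
      _ = ∫⁻ x, ∫⁻ y, (k x y * w x y) * f x ^ (2:ℝ) ∂μ ∂μ := by
          rw [hρ]
          exact lintegral_prod _ (((hkm.mul hwm).mul
            ((hf.comp measurable_fst).pow measurable_const)).aemeasurable)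
      _ = ∫⁻ x, (∫⁻ y, k x y * w x y ∂μ) * f x ^ (2:ℝ) ∂μ := by
          refine lintegral_congr fun x => ?_
          exact lintegral_mul_const'' _ ((hkm.mul hwm).comp measurable_prodMk_left).aemeasurable
      _ ≤ ∫⁻ x, C1 * f x ^ (2:ℝ) ∂μ := by
          rw [hμ]
          refine lintegral_mono_ae ?_
          filter_upwards [ae_restrict_mem hSmeas] with x hx
          exact mul_le_mul_left (hC1 x hx) _
      _ = C1 * ∫⁻ x in S, f x ^ (2:ℝ) := by
          rw [hμ]
          exact lintegral_const_mul' _ _ hC1t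
  have hGint : (∫⁻ z, G z ^ (2:ℝ) ∂ρ) ≤ C2 * ∫⁻ y in S, g y ^ (2:ℝ) := by
    calc (∫⁻ z, G z ^ (2:ℝ) ∂ρ)
        = ∫⁻ z, (k z.1 z.2 * (w z.1 z.2)⁻¹) * g z.2 ^ (2:ℝ) ∂ρ := by
          simp_rw [hG2]
      _ = ∫⁻ y, ∫⁻ x, (k x y * (w x y)⁻¹) * g y ^ (2:ℝ) ∂μ ∂μ := by
          rw [hρ]
          exact lintegral_prod_symm _ (((hkm.mul hwm.inv).mul
            ((hg.comp measurable_snd).pow measurable_const)).aemeasurable)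
      _ = ∫⁻ y, (∫⁻ x, k x y * (w x y)⁻¹ ∂μ) * g y ^ (2:ℝ) ∂μ := by
          refine lintegral_congr fun y => ?_
          exact lintegral_mul_const'' _
            ((hkm.mul hwm.inv).comp (measurable_id.prodMk measurable_const)).aemeasurable
      _ ≤ ∫⁻ y, C2 * g y ^ (2:ℝ) ∂μ := by
          rw [hμ]
          refine lintegral_mono_ae ?_
          filter_upwards [ae_restrict_mem hSmeas] with y hy
          exact mul_le_mul_left (hC2 y hy) _
      _ = C2 * ∫⁻ y in S, g y ^ (2:ℝ) := by
          rw [hμ]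
          exact lintegral_const_mul' _ _ hC2t
  -- put everything together
  have hpow2 : ∀ (h : EuclideanSpace ℝ (Fin d) → ℝ≥0∞),
      (∫⁻ x in S, h x ^ (2:ℕ)) = ∫⁻ x in S, h x ^ (2:ℝ) := by
    intro h
    refine lintegral_congr fun x => ?_
    rw [show ((2:ℝ)) = ((2:ℕ):ℝ) by norm_num, ENNReal.rpow_natCast]
  calc (∫⁻ x in S, ∫⁻ y in S,
        ENNReal.ofReal (if 4 * ℓ x ≤ dist x y ∧ dist x y ≤ 4 * ℓ y
          then ℓ x ^ (p - α * s / 2) * dist x y ^ (α * s / 2 - (d:ℝ) - p) else 0) * f x * g y)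
      = ∫⁻ x in S, ∫⁻ y in S, k x y * f x * g y := by
        simp_rw [hk, hgoal_exp, he1]
    _ = ∫⁻ z, k z.1 z.2 * f z.1 * g z.2 ∂ρ := hiter
    _ ≤ ∫⁻ z, F z * G z ∂ρ := hstep
    _ ≤ (∫⁻ z, F z ^ (2:ℝ) ∂ρ) ^ ((1:ℝ)/2) * (∫⁻ z, G z ^ (2:ℝ) ∂ρ) ^ ((1:ℝ)/2) := hholder
    _ ≤ (C1 * ∫⁻ x in S, f x ^ (2:ℝ)) ^ ((1:ℝ)/2)
        * (C2 * ∫⁻ y in S, g y ^ (2:ℝ)) ^ ((1:ℝ)/2) := by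
        exact mul_le_mul' (ENNReal.rpow_le_rpow hFint (by norm_num))
          (ENNReal.rpow_le_rpow hGint (by norm_num))
    _ = (C1 ^ ((1:ℝ)/2) * C2 ^ ((1:ℝ)/2)) * (∫⁻ x in S, f x ^ (2:ℝ)) ^ ((1:ℝ)/2)
        * (∫⁻ y in S, g y ^ (2:ℝ)) ^ ((1:ℝ)/2) := by
        rw [ENNReal.mul_rpow_of_nonneg _ _ (by norm_num : (0:ℝ) ≤ 1/2),
          ENNReal.mul_rpow_of_nonneg _ _ (by norm_num : (0:ℝ) ≤ 1/2)]
        ring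
    _ ≤ ENNReal.ofReal ((C1 ^ ((1:ℝ)/2) * C2 ^ ((1:ℝ)/2)).toReal + 1)
        * (∫⁻ x in S, f x ^ (2:ℝ)) ^ ((1:ℝ)/2) * (∫⁻ y in S, g y ^ (2:ℝ)) ^ ((1:ℝ)/2) := by
        exact mul_le_mul_left (mul_le_mul_left hCle _) _
    _ = ENNReal.ofReal ((C1 ^ ((1:ℝ)/2) * C2 ^ ((1:ℝ)/2)).toReal + 1)
        * (∫⁻ x in S, f x ^ 2) ^ ((1:ℝ)/2) * (∫⁻ y in S, g y ^ 2) ^ ((1:ℝ)/2) := by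
        rw [hpow2 f, hpow2 g]
end

section
/- Let d ≥ 1, α ∈ (0,2), p > −1, s ∈ (0, min{2d/α, 2(d+2p)/α}). There exist constants such that for all T, S > 0 with S ≤ T ≤ 1 and |T^{−1/α} − S^{−1/α}| ≤ 1, the integral ∫₀^∞ τ^{−2−s/2} (1 ∧ τ^{d/α+1}) (1 ∧ (τ/T)^{1/α})^p (1 ∧ (τ/S)^{1/α})^p dτ is comparable to 1 (bounded above and below by positive constants depending only on d, α, p, s). -/
open MeasureTheory Set

/-- Riesz kernel computation, near-diagonal regime `S ≤ T ≤ 1`,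
`|T^{-1/α} - S^{-1/α}| ≤ 1`: the integral
`∫₀^∞ τ^{-2-s/2} (1 ∧ τ^{d/α+1}) (1 ∧ (τ/T)^{1/α})^p (1 ∧ (τ/S)^{1/α})^p dτ`
is comparable to `1`. -/
theorem stmt_17 (d : ℕ) (hd : 1 ≤ d) (α p s : ℝ) (hα1 : 0 < α) (hα2 : α < 2)
    (hp1 : -1 < p) (hs0 : 0 < s)
    (hs1 : s < 2 * d / α) (hs2 : s < 2 * ((d : ℝ) + 2 * p) / α) :
    ∃ c₁ c₂ : ℝ, 0 < c₁ ∧ 0 < c₂ ∧ ∀ T S : ℝ, 0 < S → S ≤ T → T ≤ 1 →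
      |T ^ (-1 / α) - S ^ (-1 / α)| ≤ 1 →
      c₁ ≤ (∫ τ in Ioi (0:ℝ),
              τ ^ (-2 - s / 2) * min 1 (τ ^ ((d : ℝ) / α + 1))
                * (min 1 ((τ / T) ^ (1 / α))) ^ p * (min 1 ((τ / S) ^ (1 / α))) ^ p)
      ∧ (∫ τ in Ioi (0:ℝ),
              τ ^ (-2 - s / 2) * min 1 (τ ^ ((d : ℝ) / α + 1))
                * (min 1 ((τ / T) ^ (1 / α))) ^ p * (min 1 ((τ / S) ^ (1 / α))) ^ p)
          ≤ c₂ := by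
  have h1α : 0 < 1 / α := by positivity
  have hdα : 0 ≤ (d : ℝ) / α + 1 := by positivity
  set q : ℝ := min p 0 with hq
  have hq0 : q ≤ 0 := min_le_right _ _
  have hqp : q ≤ p := min_le_left _ _
  -- the exponent on (0,1)
  set E : ℝ := -2 - s / 2 + ((d : ℝ) / α + 1) + 1 / α * q + 1 / α * q with hEdef
  have hsd : s * α < 2 * ((d : ℝ) + 2 * q) := by
    rcases min_cases p 0 with ⟨h, _⟩ | ⟨h, _⟩
    · rw [hq, h]
      have := (lt_div_iff₀ hα1).1 hs2
      linarith
    · rw [hq, h]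
      have := (lt_div_iff₀ hα1).1 hs1
      linarith
  have hE : -1 < E := by
    have h2 : s / 2 < ((d : ℝ) + 2 * q) / α := by
      rw [lt_div_iff₀ hα1]; linarith
    have h3 : ((d : ℝ) + 2 * q) / α = (d : ℝ) / α + 1 / α * q + 1 / α * q := by ring
    rw [h3] at h2
    simp only [hEdef]; linarith
  have hs2' : (-2 - s / 2 : ℝ) < -1 := by linarith
  -- the dominating function
  set g : ℝ → ℝ := fun τ =>
    τ ^ (-2 - s / 2) * min 1 (τ ^ ((d : ℝ) / α + 1))
      * (min 1 (τ ^ (1 / α))) ^ q * (min 1 (τ ^ (1 / α))) ^ q with hgdef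
  -- g equals a power function on (0,1)
  have hgEq : EqOn (fun τ : ℝ => τ ^ E) g (Ioo 0 1) := by
    intro τ hτ
    have hτ0 : (0:ℝ) < τ := hτ.1
    have hτ1 : τ ≤ 1 := hτ.2.le
    have hm1 : min 1 (τ ^ ((d : ℝ) / α + 1)) = τ ^ ((d : ℝ) / α + 1) :=
      min_eq_right (Real.rpow_le_one hτ0.le hτ1 hdα)
    have hm2 : min 1 (τ ^ (1 / α)) = τ ^ (1 / α) :=
      min_eq_right (Real.rpow_le_one hτ0.le hτ1 h1α.le)
    simp only [hgdef, hm1, hm2, ← Real.rpow_mul hτ0.le]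
    rw [hEdef, Real.rpow_add hτ0, Real.rpow_add hτ0, Real.rpow_add hτ0]
  have hgEq2 : EqOn (fun τ : ℝ => τ ^ (-2 - s / 2)) g (Ici 1) := by
    intro τ hτ
    have hτ1 : (1:ℝ) ≤ τ := hτ
    have hm1 : min 1 (τ ^ ((d : ℝ) / α + 1)) = 1 := by
      refine min_eq_left ?_
      calc (1:ℝ) = 1 ^ ((d : ℝ) / α + 1) := (Real.one_rpow _).symm
        _ ≤ τ ^ ((d : ℝ) / α + 1) := Real.rpow_le_rpow zero_le_one hτ1 hdα
    have hm2 : min 1 (τ ^ (1 / α)) = 1 := by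
      refine min_eq_left ?_
      calc (1:ℝ) = 1 ^ (1 / α) := (Real.one_rpow _).symm
        _ ≤ τ ^ (1 / α) := Real.rpow_le_rpow zero_le_one hτ1 h1α.le
    simp only [hgdef, hm1, hm2, Real.one_rpow, mul_one]
  -- integrability of g
  have hg1 : IntegrableOn g (Ioo (0:ℝ) 1) :=
    IntegrableOn.congr_fun ((intervalIntegral.integrableOn_Ioo_rpow_iff one_pos).2 hE) hgEq measurableSet_Ioo
  have hg2 : IntegrableOn g (Ici (1:ℝ)) := by
    refine IntegrableOn.congr_fun ?_ hgEq2 measurableSet_Ici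
    rw [integrableOn_Ici_iff_integrableOn_Ioi]
    exact integrableOn_Ioi_rpow_of_lt hs2' one_pos
  have hgint : IntegrableOn g (Ioi (0:ℝ)) := by
    refine (hg1.union hg2).mono_set ?_
    intro x hx
    rcases lt_or_ge x 1 with h | h
    · exact Or.inl ⟨hx, h⟩
    · exact Or.inr h
  have hgnn : ∀ τ ∈ Ioi (0:ℝ), 0 ≤ g τ := by
    intro τ hτ
    have hτ0 : (0:ℝ) < τ := hτ
    have : (0:ℝ) ≤ min 1 (τ ^ (1 / α)) := le_min zero_le_one (Real.rpow_nonneg hτ0.le _)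
    have h2 : (0:ℝ) ≤ min 1 (τ ^ ((d : ℝ) / α + 1)) :=
      le_min zero_le_one (Real.rpow_nonneg hτ0.le _)
    simp only [hgdef]
    have := Real.rpow_nonneg this q
    positivity
  refine ⟨∫ τ in Ioi (1:ℝ), τ ^ (-2 - s / 2), (∫ τ in Ioi (0:ℝ), g τ) + 1, ?_, ?_, ?_⟩
  · rw [integral_Ioi_rpow_of_lt hs2' one_pos, Real.one_rpow]
    rw [neg_div]
    rw [lt_neg]
    rw [neg_zero]
    apply div_neg_of_pos_of_neg one_pos
    linarith
  · have : (0:ℝ) ≤ ∫ τ in Ioi (0:ℝ), g τ := setIntegral_nonneg measurableSet_Ioi hgnn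
    linarith
  · intro T S hS hST hT1 _
    have hT : 0 < T := lt_of_lt_of_le hS hST
    have hS1 : S ≤ 1 := le_trans hST hT1
    set f : ℝ → ℝ := fun τ =>
      τ ^ (-2 - s / 2) * min 1 (τ ^ ((d : ℝ) / α + 1))
        * (min 1 ((τ / T) ^ (1 / α))) ^ p * (min 1 ((τ / S) ^ (1 / α))) ^ p with hfdef
    -- key pointwise bound
    have key : ∀ R : ℝ, 0 < R → R ≤ 1 → ∀ τ : ℝ, 0 < τ →
        (min 1 ((τ / R) ^ (1 / α))) ^ p ≤ (min 1 (τ ^ (1 / α))) ^ q := by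
      intro R hR hR1 τ hτ
      have hdiv : 0 < τ / R := div_pos hτ hR
      have hle : τ ≤ τ / R := by
        rw [le_div_iff₀ hR]
        nlinarith
      set x : ℝ := min 1 ((τ / R) ^ (1 / α)) with hx
      set m : ℝ := min 1 (τ ^ (1 / α)) with hm
      have hm0 : 0 < m := lt_min one_pos (Real.rpow_pos_of_pos hτ _)
      have hx0 : 0 < x := lt_min one_pos (Real.rpow_pos_of_pos hdiv _)
      have hx1 : x ≤ 1 := min_le_left _ _
      have hmx : m ≤ x :=
        min_le_min le_rfl (Real.rpow_le_rpow hτ.le hle h1α.le)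
      calc x ^ p ≤ x ^ q := Real.rpow_le_rpow_of_exponent_ge hx0 hx1 hqp
        _ ≤ m ^ q := Real.rpow_le_rpow_of_nonpos hm0 hmx hq0
    have hfg : ∀ τ ∈ Ioi (0:ℝ), f τ ≤ g τ := by
      intro τ hτ
      have hτ0 : (0:ℝ) < τ := hτ
      have hA : (0:ℝ) ≤ τ ^ (-2 - s / 2) := Real.rpow_nonneg hτ0.le _
      have hB : (0:ℝ) ≤ min 1 (τ ^ ((d : ℝ) / α + 1)) :=
        le_min zero_le_one (Real.rpow_nonneg hτ0.le _)
      have hT' := key T hT hT1 τ hτ0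
      have hS' := key S hS hS1 τ hτ0
      have hTp : (0:ℝ) ≤ (min 1 ((τ / T) ^ (1 / α))) ^ p :=
        Real.rpow_nonneg (le_min zero_le_one (Real.rpow_nonneg (by positivity) _)) _
      have hSp : (0:ℝ) ≤ (min 1 ((τ / S) ^ (1 / α))) ^ p :=
        Real.rpow_nonneg (le_min zero_le_one (Real.rpow_nonneg (by positivity) _)) _
      have hmq : (0:ℝ) ≤ (min 1 (τ ^ (1 / α))) ^ q :=
        Real.rpow_nonneg (le_min zero_le_one (Real.rpow_nonneg hτ0.le _)) _
      simp only [hfdef, hgdef]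
      gcongr
    have hfnn : ∀ τ ∈ Ioi (0:ℝ), 0 ≤ f τ := by
      intro τ hτ
      have hτ0 : (0:ℝ) < τ := hτ
      have hA : (0:ℝ) ≤ τ ^ (-2 - s / 2) := Real.rpow_nonneg hτ0.le _
      have hB : (0:ℝ) ≤ min 1 (τ ^ ((d : ℝ) / α + 1)) :=
        le_min zero_le_one (Real.rpow_nonneg hτ0.le _)
      have hTp : (0:ℝ) ≤ (min 1 ((τ / T) ^ (1 / α))) ^ p :=
        Real.rpow_nonneg (le_min zero_le_one (Real.rpow_nonneg (by positivity) _)) _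
      have hSp : (0:ℝ) ≤ (min 1 ((τ / S) ^ (1 / α))) ^ p :=
        Real.rpow_nonneg (le_min zero_le_one (Real.rpow_nonneg (by positivity) _)) _
      simp only [hfdef]
      positivity
    have hfmeas : Measurable f := by
      simp only [hfdef]
      fun_prop
    have hfint : IntegrableOn f (Ioi (0:ℝ)) := by
      refine hgint.mono' hfmeas.aestronglyMeasurable ?_
      filter_upwards [ae_restrict_mem measurableSet_Ioi] with τ hτ
      rw [Real.norm_eq_abs, abs_of_nonneg (hfnn τ hτ)]
      exact hfg τ hτ
    constructor
    · -- lower bound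
      have heq : ∫ τ in Ioi (1:ℝ), f τ = ∫ τ in Ioi (1:ℝ), τ ^ (-2 - s / 2) := by
        refine setIntegral_congr_fun measurableSet_Ioi ?_
        intro τ hτ
        have hτ1 : (1:ℝ) < τ := hτ
        have hτ0 : (0:ℝ) < τ := lt_trans one_pos hτ1
        have hm1 : min 1 (τ ^ ((d : ℝ) / α + 1)) = 1 := by
          refine min_eq_left ?_
          calc (1:ℝ) = 1 ^ ((d : ℝ) / α + 1) := (Real.one_rpow _).symm
            _ ≤ τ ^ ((d : ℝ) / α + 1) := Real.rpow_le_rpow zero_le_one hτ1.le hdα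
        have hmR : ∀ R : ℝ, 0 < R → R ≤ 1 → min 1 ((τ / R) ^ (1 / α)) = 1 := by
          intro R hR hR1
          refine min_eq_left ?_
          have h1 : (1:ℝ) ≤ τ / R := by
            rw [le_div_iff₀ hR]; nlinarith
          calc (1:ℝ) = 1 ^ (1 / α) := (Real.one_rpow _).symm
            _ ≤ (τ / R) ^ (1 / α) := Real.rpow_le_rpow zero_le_one h1 h1α.le
        simp only [hfdef, hm1, hmR T hT hT1, hmR S hS hS1, Real.one_rpow, mul_one]
      calc (∫ τ in Ioi (1:ℝ), τ ^ (-2 - s / 2)) = ∫ τ in Ioi (1:ℝ), f τ := heq.symm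
        _ ≤ ∫ τ in Ioi (0:ℝ), f τ := by
            refine setIntegral_mono_set hfint ?_ ?_
            · filter_upwards [ae_restrict_mem measurableSet_Ioi] with τ hτ using hfnn τ hτ
            · exact Filter.Eventually.of_forall (fun x hx => lt_trans one_pos hx)
    · -- upper bound
      have h1 : (∫ τ in Ioi (0:ℝ), f τ) ≤ ∫ τ in Ioi (0:ℝ), g τ :=
        setIntegral_mono_on hfint hgint measurableSet_Ioi hfg
      linarith
end

section
/- Let α ∈ (0,2), d ≥ 1, p ∈ [(α−1)/2, α), and r ∈ (0,1]. Suppose v : ℝ₊^d → ℝ satisfies |v(y)| ≤ (1 ∧ |y|^{−d−α})(1 ∧ y_d)^p for all y. Then for all x ∈ ℝ₊^d with x_d ≤ r/2, the quantity ∫_{y_d > r} (1 ∧ |y|^{−d−α})(1 ∧ y_d)^p / (|x'−y'|^{d+α} + y_d^{d+α}) dy is bounded by a constant times r^{p−α} (1 ∧ |x|^{−d−α}). -/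
open MeasureTheory Set

/-- The Euclidean distance of the horizontal components `x', y'` (all coordinates
except the last) of two points in `ℝ^d`. -/
noncomputable def frontDist (d : ℕ) (x y : EuclideanSpace ℝ (Fin d)) : ℝ :=
  Real.sqrt (∑ i : Fin d, if (i : ℕ) < d - 1 then (x i - y i) ^ 2 else 0)

def auxFlat (d : ℕ) (x : EuclideanSpace ℝ (Fin d)) : EuclideanSpace ℝ (Fin d) :=
  WithLp.toLp 2 (fun i : Fin d => if (i : ℕ) < d - 1 then x i else 0)

lemma abs_coord_le (d : ℕ) (y : EuclideanSpace ℝ (Fin d)) (i : Fin d) : |y i| ≤ ‖y‖ := by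
  rw [EuclideanSpace.norm_eq, ← Real.sqrt_sq_eq_abs]
  apply Real.sqrt_le_sqrt
  have := Finset.single_le_sum (f := fun j => ‖y j‖ ^ 2) (fun j _ => by positivity)
    (Finset.mem_univ i)
  simpa [Real.norm_eq_abs, sq_abs] using this

lemma auxFlat_normsq (d : ℕ) (hd : 1 ≤ d) (x y : EuclideanSpace ℝ (Fin d)) :
    ‖y - auxFlat d x‖ ^ 2 = frontDist d x y ^ 2 + lastCoord d hd y ^ 2 := by
  have h1 : (0:ℝ) ≤ ∑ i : Fin d, if (i : ℕ) < d - 1 then (x i - y i) ^ 2 else 0 :=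
    Finset.sum_nonneg fun i _ => by positivity
  rw [EuclideanSpace.norm_eq, Real.sq_sqrt (Finset.sum_nonneg fun i _ => by positivity),
    frontDist, Real.sq_sqrt h1, lastCoord]
  have key : ∀ i : Fin d, ‖(y - auxFlat d x) i‖ ^ 2 =
      (if (i : ℕ) < d - 1 then (x i - y i) ^ 2 else 0) +
      (if i = (⟨d - 1, by omega⟩ : Fin d) then (y i) ^ 2 else 0) := by
    intro i
    have happ : (y - auxFlat d x) i = y i - auxFlat d x i := rfl
    rw [happ, Real.norm_eq_abs, sq_abs]
    by_cases hi : (i : ℕ) < d - 1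
    · have hne : ¬(i = (⟨d - 1, by omega⟩ : Fin d)) := by
        intro h; rw [h] at hi; simp only [Fin.val_mk] at hi; omega
      simp only [auxFlat, PiLp.toLp_apply, if_pos hi, if_neg hne, add_zero]; ring
    · have heq : i = (⟨d - 1, by omega⟩ : Fin d) := by
        have := i.isLt; exact Fin.ext (by simp only [Fin.val_mk]; omega)
      simp only [auxFlat, PiLp.toLp_apply, if_neg hi, if_pos heq, zero_add, sub_zero]
  rw [Finset.sum_congr rfl (fun i _ => key i), Finset.sum_add_distrib,
    Finset.sum_ite_eq' Finset.univ _ (fun i => (y i) ^ 2)]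
  simp

noncomputable def auxJ (d : ℕ) (q : ℝ) : ℝ :=
  ∫ w : EuclideanSpace ℝ (Fin d),
    Set.indicator {w : EuclideanSpace ℝ (Fin d) | 1 < ‖w‖} (fun w => ‖w‖ ^ q) w

lemma auxJ_nonneg (d : ℕ) (q : ℝ) : 0 ≤ auxJ d q :=
  integral_nonneg fun w => Set.indicator_nonneg (fun w _ => Real.rpow_nonneg (norm_nonneg w) q) w

lemma aux_shift (d : ℕ) (q : ℝ) (hq : q < -(d:ℝ)) (r : ℝ) (hr : 0 < r)
    (x0 : EuclideanSpace ℝ (Fin d)) :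
    Integrable (fun y : EuclideanSpace ℝ (Fin d) =>
      Set.indicator {y : EuclideanSpace ℝ (Fin d) | r < ‖y - x0‖} (fun y => ‖y - x0‖ ^ q) y) ∧
    ∫ y : EuclideanSpace ℝ (Fin d),
      Set.indicator {y : EuclideanSpace ℝ (Fin d) | r < ‖y - x0‖} (fun y => ‖y - x0‖ ^ q) y
      = r ^ ((d:ℝ) + q) * auxJ d q := by
  have hq0 : q ≤ 0 := by have : (0:ℝ) ≤ d := Nat.cast_nonneg d; linarith
  set g : EuclideanSpace ℝ (Fin d) → ℝ := fun w =>
    Set.indicator {w : EuclideanSpace ℝ (Fin d) | 1 < ‖w‖} (fun w => ‖w‖ ^ q) w with hg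
  have hgmeas : Measurable g := by
    apply Measurable.indicator
    · fun_prop
    · exact (isOpen_lt continuous_const continuous_norm).measurableSet
  have hgint : Integrable g := by
    have hbase : Integrable (fun w : EuclideanSpace ℝ (Fin d) =>
        (2:ℝ) ^ (-q) * (1 + ‖w‖) ^ (-(-q))) := by
      refine (integrable_one_add_norm ?_).const_mul _
      rw [finrank_euclideanSpace_fin]; linarith
    refine hbase.mono' hgmeas.aestronglyMeasurable (Filter.Eventually.of_forall fun w => ?_)
    by_cases hw : w ∈ {w : EuclideanSpace ℝ (Fin d) | 1 < ‖w‖}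
    · have hw1 : 1 < ‖w‖ := hw
      have hval : g w = ‖w‖ ^ q := indicator_of_mem hw _
      rw [Real.norm_eq_abs, hval, abs_of_nonneg (Real.rpow_nonneg (norm_nonneg w) q), neg_neg]
      have h1 : (1 + ‖w‖) / 2 ≤ ‖w‖ := by linarith
      have h2 : ‖w‖ ^ q ≤ ((1 + ‖w‖) / 2) ^ q :=
        Real.rpow_le_rpow_of_nonpos (by linarith) h1 hq0
      have h3 : ((1 + ‖w‖) / 2) ^ q = (2:ℝ) ^ (-q) * (1 + ‖w‖) ^ q := by
        rw [Real.div_rpow (by linarith) (by norm_num), Real.rpow_neg (by norm_num : (0:ℝ) ≤ 2)]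
        field_simp
      rw [h3] at h2; exact h2
    · have hval : g w = 0 := indicator_of_notMem hw _
      rw [hval, norm_zero]; positivity
  have key : ∀ z : EuclideanSpace ℝ (Fin d), g (r⁻¹ • z) =
      (r⁻¹) ^ q * Set.indicator {z : EuclideanSpace ℝ (Fin d) | r < ‖z‖}
        (fun z => ‖z‖ ^ q) z := by
    intro z
    have hnz : ‖r⁻¹ • z‖ = r⁻¹ * ‖z‖ := by
      rw [norm_smul, Real.norm_eq_abs, abs_of_pos (inv_pos.2 hr)]
    by_cases hz : r < ‖z‖
    · have h1 : (1:ℝ) < ‖r⁻¹ • z‖ := by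
        rw [hnz]
        calc (1:ℝ) = r⁻¹ * r := (inv_mul_cancel₀ hr.ne').symm
        _ < r⁻¹ * ‖z‖ := by exact mul_lt_mul_of_pos_left hz (inv_pos.2 hr)
      simp only [hg, Set.indicator_apply, mem_setOf_eq, hz, if_true, hnz]
      rw [if_pos (show (1:ℝ) < r⁻¹ * ‖z‖ from hnz ▸ h1)]
      exact Real.mul_rpow (inv_nonneg.2 hr.le) (norm_nonneg z)
    · have h1 : ¬((1:ℝ) < ‖r⁻¹ • z‖) := by
        rw [hnz]; push_neg at hz ⊢
        calc r⁻¹ * ‖z‖ ≤ r⁻¹ * r := mul_le_mul_of_nonneg_left hz (inv_nonneg.2 hr.le)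
        _ = 1 := inv_mul_cancel₀ hr.ne'
      simp only [hg, Set.indicator_apply, mem_setOf_eq, hz, if_false, mul_zero, hnz]
      rw [if_neg (show ¬(1:ℝ) < r⁻¹ * ‖z‖ from hnz ▸ h1)]
  have hrq : (0:ℝ) < r ^ q := Real.rpow_pos_of_pos hr q
  have hriq : ((r:ℝ)⁻¹) ^ q = (r ^ q)⁻¹ := Real.inv_rpow hr.le q
  have hint0 : Integrable (fun z : EuclideanSpace ℝ (Fin d) =>
      Set.indicator {z : EuclideanSpace ℝ (Fin d) | r < ‖z‖} (fun z => ‖z‖ ^ q) z) := by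
    have h1 : Integrable (fun z : EuclideanSpace ℝ (Fin d) => g (r⁻¹ • z)) :=
      hgint.comp_smul (inv_ne_zero hr.ne')
    have h2 := h1.const_mul (r ^ q)
    refine h2.congr (Filter.Eventually.of_forall fun z => ?_)
    show r ^ q * g (r⁻¹ • z) = _
    rw [key z, hriq, ← mul_assoc, mul_inv_cancel₀ hrq.ne', one_mul]
  have hscale : ∫ z : EuclideanSpace ℝ (Fin d), g (r⁻¹ • z) = r ^ d * auxJ d q := by
    rw [MeasureTheory.Measure.integral_comp_inv_smul_of_nonneg volume g hr.le,
      finrank_euclideanSpace_fin, smul_eq_mul]; rfl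
  have hval : ∫ z : EuclideanSpace ℝ (Fin d),
      Set.indicator {z : EuclideanSpace ℝ (Fin d) | r < ‖z‖} (fun z => ‖z‖ ^ q) z
      = r ^ ((d:ℝ) + q) * auxJ d q := by
    have h1 : ∫ z : EuclideanSpace ℝ (Fin d), g (r⁻¹ • z) =
        (r⁻¹) ^ q * ∫ z : EuclideanSpace ℝ (Fin d),
          Set.indicator {z : EuclideanSpace ℝ (Fin d) | r < ‖z‖} (fun z => ‖z‖ ^ q) z := by
      simp_rw [key]; exact integral_const_mul _ _
    rw [hscale, hriq] at h1
    have h2 : ∫ z : EuclideanSpace ℝ (Fin d),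
        Set.indicator {z : EuclideanSpace ℝ (Fin d) | r < ‖z‖} (fun z => ‖z‖ ^ q) z
        = r ^ q * (r ^ d * auxJ d q) := by
      field_simp at h1 ⊢; linarith [h1]
    rw [h2, Real.rpow_add hr, Real.rpow_natCast]; ring
  have htrans : ∀ y : EuclideanSpace ℝ (Fin d),
      Set.indicator {y : EuclideanSpace ℝ (Fin d) | r < ‖y - x0‖} (fun y => ‖y - x0‖ ^ q) y
      = Set.indicator {z : EuclideanSpace ℝ (Fin d) | r < ‖z‖} (fun z => ‖z‖ ^ q) (y - x0) :=
    fun y => rfl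
  constructor
  · exact (hint0.comp_sub_right x0).congr (Filter.Eventually.of_forall fun y => (htrans y).symm)
  · calc ∫ y : EuclideanSpace ℝ (Fin d),
        Set.indicator {y : EuclideanSpace ℝ (Fin d) | r < ‖y - x0‖} (fun y => ‖y - x0‖ ^ q) y
        = ∫ y : EuclideanSpace ℝ (Fin d),
          Set.indicator {z : EuclideanSpace ℝ (Fin d) | r < ‖z‖} (fun z => ‖z‖ ^ q) (y - x0) := by
          simp_rw [htrans]
      _ = ∫ z : EuclideanSpace ℝ (Fin d),
          Set.indicator {z : EuclideanSpace ℝ (Fin d) | r < ‖z‖} (fun z => ‖z‖ ^ q) z :=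
          integral_sub_right_eq_self _ x0
      _ = r ^ ((d:ℝ) + q) * auxJ d q := hval

set_option maxHeartbeats 2000000 in
/-- Key estimate for the boundary cut-off commutator bound: for `x_d ≤ r/2`,
`∫_{y_d > r} (1 ∧ |y|^{-d-α})(1 ∧ y_d)^p / (|x'-y'|^{d+α} + y_d^{d+α}) dy
  ≲ r^{p-α} (1 ∧ |x|^{-d-α})`. -/
theorem stmt_18 (d : ℕ) (hd : 1 ≤ d) (α p : ℝ) (hα1 : 0 < α) (hα2 : α < 2)
    (hp1 : (α - 1) / 2 ≤ p) (hp2 : p < α) :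
    ∃ c : ℝ, 0 < c ∧ ∀ r : ℝ, 0 < r → r ≤ 1 →
      ∀ v : EuclideanSpace ℝ (Fin d) → ℝ,
        (∀ y, 0 < lastCoord d hd y →
          |v y| ≤ min 1 (‖y‖ ^ (-((d : ℝ) + α))) * (min 1 (lastCoord d hd y)) ^ p) →
        ∀ x : EuclideanSpace ℝ (Fin d), 0 < lastCoord d hd x → lastCoord d hd x ≤ r / 2 →
          (∫ y in {y | r < lastCoord d hd y},
              (min 1 (‖y‖ ^ (-((d : ℝ) + α))) * (min 1 (lastCoord d hd y)) ^ p) /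
                (frontDist d x y ^ ((d : ℝ) + α) + (lastCoord d hd y) ^ ((d : ℝ) + α)))
            ≤ c * r ^ (p - α) * min 1 (‖x‖ ^ (-((d : ℝ) + α))) := by
  have hd1 : (1:ℝ) ≤ (d:ℝ) := by exact_mod_cast hd
  set s : ℝ := (d:ℝ) + α with hs_def
  have hs_pos : (0:ℝ) < s := by rw [hs_def]; linarith
  have hds : (d:ℝ) < s := by rw [hs_def]; linarith
  set e : ℝ := if 0 ≤ p then 0 else p with he_def
  have he_nonpos : e ≤ 0 := by
    rw [he_def]; split_ifs with h
    · exact le_refl 0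
    · linarith [not_le.1 h]
  have hpe_nonneg : 0 ≤ p - e := by
    rw [he_def]; split_ifs with h
    · simpa using h
    · simp
  have hpe_lt : p - e < α := by
    rw [he_def]; split_ifs with h
    · simpa using hp2
    · simpa using hα1
  have hep : p - α ≤ e := by rw [he_def]; split_ifs with h <;> linarith
  set q : ℝ := p - e - s with hq_def
  have hq : q < -(d:ℝ) := by rw [hq_def, hs_def]; linarith
  have heq : e + ((d:ℝ) + q) = p - α := by rw [hq_def]; ring
  have hJ0 : 0 ≤ auxJ d q := auxJ_nonneg d q
  have hKint : Integrable (fun y : EuclideanSpace ℝ (Fin d) => (1 + ‖y‖) ^ (-s)) :=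
    integrable_one_add_norm (by rw [finrank_euclideanSpace_fin]; exact hds)
  set K : ℝ := ∫ y : EuclideanSpace ℝ (Fin d), (1 + ‖y‖) ^ (-s) with hK_def
  have hK0 : 0 ≤ K := integral_nonneg fun y => Real.rpow_nonneg (by positivity) _
  have h2s : (0:ℝ) < 2 ^ (s/2) := Real.rpow_pos_of_pos two_pos _
  have h2s' : (0:ℝ) < 2 ^ s := Real.rpow_pos_of_pos two_pos _
  have h4s : (0:ℝ) < 4 ^ s := Real.rpow_pos_of_pos (by norm_num) _
  have h8s : (0:ℝ) < 8 ^ s := Real.rpow_pos_of_pos (by norm_num) _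
  set c : ℝ := 2^(s/2)*4^s*(auxJ d q + 1) + 2^s*2^(s/2)*auxJ d q
      + 2^(s/2)*8^s*2^s*(K+1) + 1 with hc_def
  have hA1 : 0 ≤ 2^(s/2)*4^s*(auxJ d q + 1) :=
    mul_nonneg (mul_nonneg h2s.le h4s.le) (by linarith)
  have hA2 : 0 ≤ 2^s*2^(s/2)*auxJ d q := mul_nonneg (mul_nonneg h2s'.le h2s.le) hJ0
  have hA3 : 0 ≤ 2^(s/2)*8^s*2^s*(K+1) :=
    mul_nonneg (mul_nonneg (mul_nonneg h2s.le h8s.le) h2s'.le) (by linarith)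
  have hc0 : 0 < c := by rw [hc_def]; linarith
  refine ⟨c, hc0, ?_⟩
  intro r hr hr1 v hv x hxpos hxr
  obtain ⟨hΦint, hΦval⟩ := aux_shift d q hq r hr (auxFlat d x)
  set x' : EuclideanSpace ℝ (Fin d) := auxFlat d x with hx'_def
  set S : Set (EuclideanSpace ℝ (Fin d)) := {y | r < lastCoord d hd y} with hS_def
  have hSmeas : MeasurableSet S := by
    have hc : Continuous fun y : EuclideanSpace ℝ (Fin d) => lastCoord d hd y := by
      have h : (fun y : EuclideanSpace ℝ (Fin d) => lastCoord d hd y)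
          = fun y => (EuclideanSpace.proj (⟨d-1, by omega⟩ : Fin d)) y := rfl
      rw [h]; exact (EuclideanSpace.proj _).continuous
    exact (isOpen_lt continuous_const hc).measurableSet
  have hxd : lastCoord d hd x ≤ ‖x‖ := le_trans (le_abs_self _) (abs_coord_le d x _)
  have hxnorm_pos : 0 < ‖x‖ := lt_of_lt_of_le hxpos hxd
  have hxx' : ‖x - x'‖ = lastCoord d hd x := by
    have h1 := auxFlat_normsq d hd x x
    have h2 : frontDist d x x = 0 := by
      have h0 : ∀ i : Fin d, (if (i:ℕ) < d - 1 then (x i - x i)^2 else 0) = 0 := fun i => by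
        split_ifs <;> simp
      rw [frontDist, Finset.sum_congr rfl fun i _ => h0 i, Finset.sum_const_zero, Real.sqrt_zero]
    rw [h2] at h1
    have h3 : ‖x - x'‖^2 = lastCoord d hd x ^2 := by rw [h1]; ring
    rw [← Real.sqrt_sq (norm_nonneg (x - x')), h3, Real.sqrt_sq hxpos.le]
  have hx'norm : ‖x‖ - lastCoord d hd x ≤ ‖x'‖ := by
    have h1 := norm_sub_norm_le x x'
    rw [hxx'] at h1; linarith
  have geom : ∀ y ∈ S, r < ‖y - x'‖ ∧ lastCoord d hd y ≤ ‖y - x'‖ ∧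
      2 ^ (-(s/2)) * ‖y - x'‖ ^ s ≤ frontDist d x y ^ s + lastCoord d hd y ^ s := by
    intro y hy
    have hLr : r < lastCoord d hd y := hy
    have hL0 : 0 < lastCoord d hd y := hr.trans hLr
    have hF0 : 0 ≤ frontDist d x y := Real.sqrt_nonneg _
    have hR2 : ‖y - x'‖^2 = frontDist d x y ^2 + lastCoord d hd y^2 := auxFlat_normsq d hd x y
    set L := lastCoord d hd y
    set F := frontDist d x y
    set R := ‖y - x'‖ with hR_def
    have hRR : R = Real.sqrt (F^2 + L^2) := by rw [← hR2, Real.sqrt_sq (norm_nonneg _)]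
    have hLR : L ≤ R := by
      rw [hRR]
      calc L = Real.sqrt (L^2) := (Real.sqrt_sq hL0.le).symm
        _ ≤ Real.sqrt (F^2 + L^2) := Real.sqrt_le_sqrt (by nlinarith [sq_nonneg F])
    have hrR : r < R := lt_of_lt_of_le hLr hLR
    have hR0 : 0 < R := hr.trans hrR
    refine ⟨hrR, hLR, ?_⟩
    have hmaxnn : 0 ≤ max F L := le_trans hF0 (le_max_left F L)
    have h1 : R ≤ Real.sqrt 2 * max F L := by
      rw [hRR]
      have h2m : F^2 + L^2 ≤ 2 * (max F L)^2 := by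
        rcases le_total F L with h | h
        · rw [max_eq_right h]; nlinarith
        · rw [max_eq_left h]; nlinarith
      calc Real.sqrt (F^2+L^2) ≤ Real.sqrt (2 * (max F L)^2) := Real.sqrt_le_sqrt h2m
        _ = Real.sqrt 2 * max F L := by
            rw [Real.sqrt_mul (by norm_num) ((max F L)^2), Real.sqrt_sq hmaxnn]
    have h2 : R ^ s ≤ (Real.sqrt 2 * max F L) ^ s := Real.rpow_le_rpow hR0.le h1 hs_pos.le
    have h3 : (Real.sqrt 2 * max F L) ^ s = 2^(s/2) * (max F L)^s := by
      rw [Real.mul_rpow (Real.sqrt_nonneg 2) hmaxnn]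
      congr 1
      rw [Real.sqrt_eq_rpow, ← Real.rpow_mul (by norm_num : (0:ℝ) ≤ 2)]
      congr 1; ring
    have h4 : (max F L)^s ≤ F^s + L^s := by
      rcases le_total F L with h | h
      · rw [max_eq_right h]; exact le_add_of_nonneg_left (Real.rpow_nonneg hF0 s)
      · rw [max_eq_left h]; exact le_add_of_nonneg_right (Real.rpow_nonneg hL0.le s)
    have h5 : R^s ≤ 2^(s/2) * (F^s + L^s) := by
      calc R^s ≤ 2^(s/2) * (max F L)^s := by rw [← h3]; exact h2
        _ ≤ 2^(s/2) * (F^s + L^s) := mul_le_mul_of_nonneg_left h4 h2s.le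
    rw [Real.rpow_neg (by norm_num : (0:ℝ) ≤ 2)]
    exact (inv_mul_le_iff₀ h2s).2 h5
  set fint : EuclideanSpace ℝ (Fin d) → ℝ := fun y =>
    (min 1 (‖y‖ ^ (-s)) * (min 1 (lastCoord d hd y)) ^ p) /
      (frontDist d x y ^ s + (lastCoord d hd y) ^ s) with hfint_def
  have hfint_nonneg : ∀ y ∈ S, 0 ≤ fint y := by
    intro y hy
    have hL0 : 0 < lastCoord d hd y := hr.trans hy
    apply div_nonneg
    · exact mul_nonneg (le_min zero_le_one (Real.rpow_nonneg (norm_nonneg y) _))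
        (Real.rpow_nonneg (le_min zero_le_one hL0.le) p)
    · exact add_nonneg (Real.rpow_nonneg (Real.sqrt_nonneg _) s) (Real.rpow_nonneg hL0.le s)
  have hind_nonneg : ∀ y, 0 ≤ S.indicator fint y :=
    fun y => indicator_nonneg (fun y hy => hfint_nonneg y hy) y
  have hre : (0:ℝ) < r ^ e := Real.rpow_pos_of_pos hr e
  have hminL : ∀ y ∈ S, (min 1 (lastCoord d hd y)) ^ p ≤ r ^ e * ‖y - x'‖ ^ (p - e) := by
    intro y hy
    have hL0 : 0 < lastCoord d hd y := hr.trans hy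
    obtain ⟨hrR, hLR, -⟩ := geom y hy
    by_cases hp0 : 0 ≤ p
    · rw [he_def, if_pos hp0, Real.rpow_zero, one_mul, sub_zero]
      exact Real.rpow_le_rpow (le_min zero_le_one hL0.le) ((min_le_right _ _).trans hLR) hp0
    · rw [he_def, if_neg hp0, sub_self, Real.rpow_zero, mul_one]
      exact Real.rpow_le_rpow_of_nonpos hr (le_min hr1 (le_of_lt hy)) (le_of_not_ge hp0)
  have hminL2 : ∀ y ∈ S, (min 1 (lastCoord d hd y)) ^ p ≤ r ^ e := by
    intro y hy
    have hL0 : 0 < lastCoord d hd y := hr.trans hy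
    by_cases hp0 : 0 ≤ p
    · rw [he_def, if_pos hp0, Real.rpow_zero]
      exact Real.rpow_le_one (le_min zero_le_one hL0.le) (min_le_left _ _) hp0
    · rw [he_def, if_neg hp0]
      exact Real.rpow_le_rpow_of_nonpos hr (le_min hr1 (le_of_lt hy)) (le_of_not_ge hp0)
  have core : ∀ y ∈ S, ∀ A : ℝ, min 1 (‖y‖ ^ (-s)) ≤ A →
      fint y ≤ A * (2^(s/2) * r^e * ‖y - x'‖ ^ q) := by
    intro y hy A hA
    obtain ⟨hrR, hLR, hden⟩ := geom y hy
    have hL0 : 0 < lastCoord d hd y := hr.trans hy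
    have hR0 : 0 < ‖y - x'‖ := hr.trans hrR
    have hA0 : 0 ≤ A := le_trans (le_min zero_le_one (Real.rpow_nonneg (norm_nonneg y) _)) hA
    have hnum : min 1 (‖y‖^(-s)) * (min 1 (lastCoord d hd y))^p ≤ A * (r^e * ‖y - x'‖^(p-e)) :=
      mul_le_mul hA (hminL y hy) (Real.rpow_nonneg (le_min zero_le_one hL0.le) p) hA0
    have hdenpos : 0 < 2^(-(s/2)) * ‖y - x'‖^s := by positivity
    have hstep := div_le_div₀ (mul_nonneg hA0 (mul_nonneg hre.le (Real.rpow_nonneg hR0.le _)))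
        hnum hdenpos hden
    refine le_trans hstep (le_of_eq ?_)
    have h2c : (2:ℝ)^(s/2) * 2^(-(s/2)) = 1 := by
      rw [← Real.rpow_add two_pos]; norm_num
    have hRc : ‖y - x'‖^q * ‖y - x'‖^s = ‖y - x'‖^(p-e) := by
      rw [← Real.rpow_add hR0]; congr 1; rw [hq_def]; ring
    rw [div_eq_iff (ne_of_gt hdenpos)]
    calc A * (r^e * ‖y - x'‖^(p-e)) = A * (r^e * (‖y - x'‖^q * ‖y - x'‖^s)) * 1 := by
          rw [hRc, mul_one]
      _ = A * (2^(s/2) * r^e * ‖y - x'‖^q) * (2^(-(s/2)) * ‖y - x'‖^s) := by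
          rw [← h2c]; ring
  have core2 : ∀ y ∈ S, ∀ B : ℝ, 0 < B → B ≤ ‖y - x'‖ →
      fint y ≤ (min 1 (‖y‖ ^ (-s)) * r ^ e) * (2^(s/2) * B ^ (-s)) := by
    intro y hy B hB0 hBR
    obtain ⟨hrR, hLR, hden⟩ := geom y hy
    have hL0 : 0 < lastCoord d hd y := hr.trans hy
    have hR0 : 0 < ‖y - x'‖ := hr.trans hrR
    have hmin0 : 0 ≤ min 1 (‖y‖ ^ (-s)) := le_min zero_le_one (Real.rpow_nonneg (norm_nonneg y) _)
    have hnum : min 1 (‖y‖^(-s)) * (min 1 (lastCoord d hd y))^p ≤ min 1 (‖y‖^(-s)) * r^e :=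
      mul_le_mul_of_nonneg_left (hminL2 y hy) hmin0
    have hdenpos : 0 < 2^(-(s/2)) * B^s := by positivity
    have hdenle : 2^(-(s/2)) * B^s ≤ frontDist d x y ^ s + lastCoord d hd y ^ s :=
      le_trans (mul_le_mul_of_nonneg_left (Real.rpow_le_rpow hB0.le hBR hs_pos.le)
        (by positivity)) hden
    have hstep := div_le_div₀ (mul_nonneg hmin0 hre.le) hnum hdenpos hdenle
    refine le_trans hstep (le_of_eq ?_)
    rw [Real.rpow_neg (by norm_num : (0:ℝ) ≤ 2), Real.rpow_neg hB0.le]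
    field_simp
  have hhalf : ∀ w z : ℝ, 0 < w → w ≤ 2*z → z^(-s) ≤ 2^s * w^(-s) := by
    intro w z hw hwz
    have hz : 0 < z := by linarith
    have h2 : z^(-s) ≤ (w/2)^(-s) :=
      Real.rpow_le_rpow_of_nonpos (by linarith) (by linarith) (neg_nonpos.2 hs_pos.le)
    have h3 : (w/2)^(-s) = 2^s * w^(-s) := by
      rw [Real.div_rpow hw.le (by norm_num : (0:ℝ) ≤ 2), Real.rpow_neg hw.le,
        Real.rpow_neg (by norm_num : (0:ℝ) ≤ 2)]
      field_simp
    rw [h3] at h2; exact h2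
  have hjap : ∀ y : EuclideanSpace ℝ (Fin d), min 1 (‖y‖ ^ (-s)) ≤ 2^s * (1+‖y‖)^(-s) := by
    intro y
    by_cases h1 : 1 ≤ ‖y‖
    · exact (min_le_right _ _).trans (hhalf (1+‖y‖) ‖y‖ (by positivity) (by linarith))
    · refine (min_le_left _ _).trans ?_
      have h2 : (1+‖y‖)^s ≤ 2^s :=
        Real.rpow_le_rpow (by positivity) (by push_neg at h1; linarith) hs_pos.le
      rw [Real.rpow_neg (by positivity), ← div_eq_mul_inv]
      exact (one_le_div (Real.rpow_pos_of_pos (by positivity) s)).2 h2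
  have hrpα : (0:ℝ) < r^(p-α) := Real.rpow_pos_of_pos hr _
  rw [← integral_indicator hSmeas]
  by_cases hx4 : ‖x‖ ≤ 4
  · -- case ‖x‖ ≤ 4
    have hmono : ∀ y, S.indicator fint y ≤ (2^(s/2) * r^e) *
        Set.indicator {y : EuclideanSpace ℝ (Fin d) | r < ‖y - x'‖} (fun y => ‖y - x'‖ ^ q) y := by
      intro y
      have hΦnn : 0 ≤ Set.indicator {y : EuclideanSpace ℝ (Fin d) | r < ‖y - x'‖}
          (fun y => ‖y - x'‖ ^ q) y :=
        indicator_nonneg (fun z _ => Real.rpow_nonneg (norm_nonneg _) _) y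
      by_cases hy : y ∈ S
      · rw [indicator_of_mem hy]
        obtain ⟨hrR, -, -⟩ := geom y hy
        have hyT : y ∈ {y : EuclideanSpace ℝ (Fin d) | r < ‖y - x'‖} := hrR
        rw [indicator_of_mem hyT]
        have h1 := core y hy 1 (min_le_left _ _)
        rw [one_mul] at h1
        calc fint y ≤ 2^(s/2) * r^e * ‖y - x'‖^q := h1
          _ = (2^(s/2) * r^e) * ‖y - x'‖^q := by ring
      · rw [indicator_of_notMem hy]
        exact mul_nonneg (by positivity) hΦnn
    have hIG := integral_mono_of_nonneg (Filter.Eventually.of_forall hind_nonneg)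
      (hΦint.const_mul _) (Filter.Eventually.of_forall hmono)
    have hGval : ∫ y : EuclideanSpace ℝ (Fin d), (2^(s/2) * r^e) *
        Set.indicator {y : EuclideanSpace ℝ (Fin d) | r < ‖y - x'‖} (fun y => ‖y - x'‖ ^ q) y
        = 2^(s/2) * auxJ d q * r^(p-α) := by
      rw [integral_const_mul, hΦval]
      have hrr : r^e * r^((d:ℝ)+q) = r^(p-α) := by rw [← Real.rpow_add hr, heq]
      calc (2^(s/2) * r^e) * (r^((d:ℝ)+q) * auxJ d q)
          = 2^(s/2) * auxJ d q * (r^e * r^((d:ℝ)+q)) := by ring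
        _ = 2^(s/2) * auxJ d q * r^(p-α) := by rw [hrr]
    have hM : (4:ℝ)^(-s) ≤ min 1 (‖x‖ ^ (-s)) :=
      le_min (Real.rpow_le_one_of_one_le_of_nonpos (by norm_num) (neg_nonpos.2 hs_pos.le))
        (Real.rpow_le_rpow_of_nonpos hxnorm_pos hx4 (neg_nonpos.2 hs_pos.le))
    have h4s4 : (4:ℝ)^s * (4:ℝ)^(-s) = 1 := by
      rw [Real.rpow_neg (by norm_num : (0:ℝ) ≤ 4)]
      exact mul_inv_cancel₀ h4s.ne'
    have hcM : 2^(s/2) * auxJ d q ≤ c * min 1 (‖x‖ ^ (-s)) := by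
      have h1 : 2^(s/2) * auxJ d q ≤ (2^(s/2)*4^s*(auxJ d q + 1)) * ((4:ℝ)^(-s)) := by
        have : (2^(s/2)*4^s*(auxJ d q + 1)) * ((4:ℝ)^(-s))
            = 2^(s/2)*(auxJ d q + 1) * ((4:ℝ)^s * (4:ℝ)^(-s)) := by ring
        rw [this, h4s4, mul_one]
        nlinarith [h2s]
      have h2 : (2^(s/2)*4^s*(auxJ d q + 1)) * ((4:ℝ)^(-s)) ≤ c * min 1 (‖x‖ ^ (-s)) := by
        apply mul_le_mul _ hM (by positivity) hc0.le
        rw [hc_def]; linarith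
      linarith
    calc ∫ y : EuclideanSpace ℝ (Fin d), S.indicator fint y
        ≤ 2^(s/2) * auxJ d q * r^(p-α) := by rw [← hGval]; exact hIG
      _ ≤ (c * min 1 (‖x‖ ^ (-s))) * r^(p-α) := mul_le_mul_of_nonneg_right hcM hrpα.le
      _ = c * r^(p-α) * min 1 (‖x‖ ^ (-s)) := by ring
  · -- case ‖x‖ > 4
    push_neg at hx4
    set N : ℝ := (1+‖x‖)^(-s) with hN_def
    have hN0 : 0 < N := Real.rpow_pos_of_pos (by positivity) _
    have hNM : N ≤ min 1 (‖x‖ ^ (-s)) :=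
      le_min (Real.rpow_le_one_of_one_le_of_nonpos (by linarith [norm_nonneg x])
          (neg_nonpos.2 hs_pos.le))
        (Real.rpow_le_rpow_of_nonpos hxnorm_pos (by linarith) (neg_nonpos.2 hs_pos.le))
    have hmono : ∀ y, S.indicator fint y ≤ (2^s * 2^(s/2) * N * r^e) *
        Set.indicator {y : EuclideanSpace ℝ (Fin d) | r < ‖y - x'‖} (fun y => ‖y - x'‖ ^ q) y
        + (2^(s/2) * 8^s * N * r^e * 2^s) * (1+‖y‖)^(-s) := by
      intro y
      have hΦnn : 0 ≤ Set.indicator {y : EuclideanSpace ℝ (Fin d) | r < ‖y - x'‖}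
          (fun y => ‖y - x'‖ ^ q) y :=
        indicator_nonneg (fun z _ => Real.rpow_nonneg (norm_nonneg _) _) y
      have hΨnn : (0:ℝ) ≤ (1+‖y‖)^(-s) := Real.rpow_nonneg (by positivity) _
      by_cases hy : y ∈ S
      · rw [indicator_of_mem hy]
        obtain ⟨hrR, hLR, -⟩ := geom y hy
        by_cases hS1 : 1 + ‖x‖ ≤ 2 * ‖y‖
        · have hA : min 1 (‖y‖^(-s)) ≤ 2^s * N := by
            refine (min_le_right _ _).trans ?_
            rw [hN_def]
            exact hhalf (1+‖x‖) ‖y‖ (by positivity) hS1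
          have h1 := core y hy (2^s * N) hA
          have hyT : y ∈ {y : EuclideanSpace ℝ (Fin d) | r < ‖y - x'‖} := hrR
          rw [indicator_of_mem hyT]
          calc fint y ≤ (2^s*N) * (2^(s/2)*r^e*‖y-x'‖^q) := h1
            _ = (2^s * 2^(s/2) * N * r^e) * ‖y-x'‖^q := by ring
            _ ≤ (2^s * 2^(s/2) * N * r^e) * ‖y-x'‖^q
                + (2^(s/2) * 8^s * N * r^e * 2^s) * (1+‖y‖)^(-s) :=
              le_add_of_nonneg_right (mul_nonneg (by positivity) hΨnn)
        · push_neg at hS1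
          have h8 : (1+‖x‖)/8 ≤ ‖y - x'‖ := by
            have h1 : ‖x'‖ - ‖y‖ ≤ ‖x' - y‖ := norm_sub_norm_le x' y
            have h2 : ‖x' - y‖ = ‖y - x'‖ := norm_sub_rev x' y
            have h3 : lastCoord d hd x ≤ 1/2 := by linarith
            rw [h2] at h1
            linarith
          have h1 := core2 y hy ((1+‖x‖)/8) (by positivity) h8
          have hB : ((1+‖x‖)/8)^(-s) = 8^s * N := by
            rw [hN_def, Real.div_rpow (by positivity) (by norm_num : (0:ℝ) ≤ 8),
              Real.rpow_neg (by norm_num : (0:ℝ) ≤ 8)]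
            field_simp
          have h2 : min 1 (‖y‖^(-s)) * r^e ≤ (2^s * (1+‖y‖)^(-s)) * r^e :=
            mul_le_mul_of_nonneg_right (hjap y) hre.le
          calc fint y ≤ (min 1 (‖y‖^(-s)) * r^e) * (2^(s/2) * ((1+‖x‖)/8)^(-s)) := h1
            _ ≤ ((2^s * (1+‖y‖)^(-s)) * r^e) * (2^(s/2) * ((1+‖x‖)/8)^(-s)) :=
                mul_le_mul_of_nonneg_right h2 (by positivity)
            _ = (2^(s/2) * 8^s * N * r^e * 2^s) * (1+‖y‖)^(-s) := by rw [hB]; ring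
            _ ≤ (2^s * 2^(s/2) * N * r^e) *
                Set.indicator {y : EuclideanSpace ℝ (Fin d) | r < ‖y - x'‖}
                  (fun y => ‖y - x'‖ ^ q) y
                + (2^(s/2) * 8^s * N * r^e * 2^s) * (1+‖y‖)^(-s) :=
              le_add_of_nonneg_left (mul_nonneg (by positivity) hΦnn)
      · rw [indicator_of_notMem hy]
        exact add_nonneg (mul_nonneg (by positivity) hΦnn) (mul_nonneg (by positivity) hΨnn)
    have hGint : Integrable (fun y : EuclideanSpace ℝ (Fin d) => (2^s * 2^(s/2) * N * r^e) *
        Set.indicator {y : EuclideanSpace ℝ (Fin d) | r < ‖y - x'‖} (fun y => ‖y - x'‖ ^ q) y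
        + (2^(s/2) * 8^s * N * r^e * 2^s) * (1+‖y‖)^(-s)) :=
      (hΦint.const_mul _).add (hKint.const_mul _)
    have hIG := integral_mono_of_nonneg (Filter.Eventually.of_forall hind_nonneg) hGint
      (Filter.Eventually.of_forall hmono)
    have hGval : ∫ y : EuclideanSpace ℝ (Fin d), ((2^s * 2^(s/2) * N * r^e) *
        Set.indicator {y : EuclideanSpace ℝ (Fin d) | r < ‖y - x'‖} (fun y => ‖y - x'‖ ^ q) y
        + (2^(s/2) * 8^s * N * r^e * 2^s) * (1+‖y‖)^(-s))
        = (2^s * 2^(s/2) * N * r^e) * (r^((d:ℝ)+q) * auxJ d q)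
          + (2^(s/2) * 8^s * N * r^e * 2^s) * K := by
      rw [integral_add (hΦint.const_mul _) (hKint.const_mul _), integral_const_mul,
        integral_const_mul, hΦval, hK_def]
    have hre_le : r^e ≤ r^(p-α) := Real.rpow_le_rpow_of_exponent_ge hr hr1 hep
    have hrr : r^e * r^((d:ℝ)+q) = r^(p-α) := by rw [← Real.rpow_add hr, heq]
    have hterm1 : (2^s * 2^(s/2) * N * r^e) * (r^((d:ℝ)+q) * auxJ d q)
        = (2^s*2^(s/2)*auxJ d q) * N * r^(p-α) := by
      calc (2^s * 2^(s/2) * N * r^e) * (r^((d:ℝ)+q) * auxJ d q)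
          = (2^s*2^(s/2)*auxJ d q) * N * (r^e * r^((d:ℝ)+q)) := by ring
        _ = (2^s*2^(s/2)*auxJ d q) * N * r^(p-α) := by rw [hrr]
    have hterm2 : (2^(s/2) * 8^s * N * r^e * 2^s) * K
        ≤ (2^(s/2)*8^s*2^s*K) * N * r^(p-α) := by
      have h1 : (2^(s/2) * 8^s * N * r^e * 2^s) * K = ((2^(s/2)*8^s*2^s*K) * N) * r^e := by ring
      have h2 : 0 ≤ (2^(s/2)*8^s*2^s*K) * N :=
        mul_nonneg (mul_nonneg (mul_nonneg (mul_nonneg h2s.le h8s.le) h2s'.le) hK0) hN0.le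
      rw [h1]
      calc ((2^(s/2)*8^s*2^s*K) * N) * r^e ≤ ((2^(s/2)*8^s*2^s*K) * N) * r^(p-α) :=
            mul_le_mul_of_nonneg_left hre_le h2
        _ = (2^(s/2)*8^s*2^s*K) * N * r^(p-α) := by ring
    have hcoef : 2^s*2^(s/2)*auxJ d q + 2^(s/2)*8^s*2^s*K ≤ c := by
      have hexp : 2^(s/2)*8^s*2^s*(K+1) = 2^(s/2)*8^s*2^s*K + 2^(s/2)*8^s*2^s := by ring
      have hpos : (0:ℝ) ≤ 2^(s/2)*8^s*2^s := by positivity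
      rw [hc_def]; linarith
    have hfinal : (2^s*2^(s/2)*auxJ d q) * N * r^(p-α) + (2^(s/2)*8^s*2^s*K) * N * r^(p-α)
        ≤ c * r^(p-α) * min 1 (‖x‖ ^ (-s)) := by
      have h1 : (2^s*2^(s/2)*auxJ d q) * N * r^(p-α) + (2^(s/2)*8^s*2^s*K) * N * r^(p-α)
          = ((2^s*2^(s/2)*auxJ d q + 2^(s/2)*8^s*2^s*K) * N) * r^(p-α) := by ring
      rw [h1]
      have h2 : (2^s*2^(s/2)*auxJ d q + 2^(s/2)*8^s*2^s*K) * N ≤ c * min 1 (‖x‖ ^ (-s)) := by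
        apply mul_le_mul hcoef hNM hN0.le hc0.le
      calc ((2^s*2^(s/2)*auxJ d q + 2^(s/2)*8^s*2^s*K) * N) * r^(p-α)
          ≤ (c * min 1 (‖x‖ ^ (-s))) * r^(p-α) := mul_le_mul_of_nonneg_right h2 hrpα.le
        _ = c * r^(p-α) * min 1 (‖x‖ ^ (-s)) := by ring
    calc ∫ y : EuclideanSpace ℝ (Fin d), S.indicator fint y
        ≤ (2^s * 2^(s/2) * N * r^e) * (r^((d:ℝ)+q) * auxJ d q)
          + (2^(s/2) * 8^s * N * r^e * 2^s) * K := by rw [← hGval]; exact hIG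
      _ ≤ (2^s*2^(s/2)*auxJ d q) * N * r^(p-α) + (2^(s/2)*8^s*2^s*K) * N * r^(p-α) := by
          rw [hterm1]; linarith [hterm2]
      _ ≤ c * r^(p-α) * min 1 (‖x‖ ^ (-s)) := hfinal
end
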